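/- arXiv:0707.2576 — 6 statements merged into one kernel-verified Lean document; each statement's English description precedes it below -/
import Mathlib

section
/- Every connected simple outerplanar graph with at least two vertices satisfies at least one of: (1) it has a vertex of degree 1; (2) it has two adjacent vertices each of degree 2; (3) it has a vertex u of degree 2 whose two neighbors v and w are themselves adjacent; (4) it has a vertex u of degree 2 whose deletion disconnects the graph. -/
/-- An incidence of `G` is a pair `(v, vw)` with `G.Adj v w`, encoded as the ordered pair
`(v, w)`.  Two incidences `(v, vw)` and `(v', v'w')` are adjacent if `v = v'`, `w = v'`
or `v = w'`.  A `(k, l)`-incidence coloring is a proper coloring of the incidences with at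
most `k` colors such that for every vertex `v` at most `l` colors appear on the incoming
incidences `(u, uv)`. -/
def IsIncColoring {V : Type*} (G : SimpleGraph V) (k l : ℕ) (c : V → V → Fin k) : Prop :=
  (∀ v w v' w' : V, G.Adj v w → G.Adj v' w' → (v, w) ≠ (v', w') →
      (v = v' ∨ w = v' ∨ v = w') → c v w ≠ c v' w') ∧
  (∀ v : V, {x : Fin k | ∃ u, G.Adj u v ∧ c u v = x}.ncard ≤ l)

/-- `G` has a `(k, l)`-incidence coloring. -/
def HasIncColoring {V : Type*} (G : SimpleGraph V) (k l : ℕ) : Prop :=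
  ∃ c : V → V → Fin k, IsIncColoring G k l c

/-- A graph is outerplanar iff it has a one-page book embedding: the vertices can be placed
(injectively) on a line so that no two edges interleave. -/
def Outerplanar {V : Type*} (G : SimpleGraph V) : Prop :=
  ∃ f : V → ℝ, Function.Injective f ∧
    ∀ a b c d : V, G.Adj a b → G.Adj c d →
      ¬(f a < f c ∧ f c < f b ∧ f b < f d)

/-!
Order the vertices along the spine of a one-page book embedding, so that no two edges
interleave. If no edge spans a vertex, the leftmost vertex has degree 1. Otherwise take an
edge `vw` spanning a nonempty set `S` of vertices that is minimal under inclusion; then every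
edge with an endpoint in `S` joins consecutive vertices. The rightmost vertex `x`
of `S` is adjacent at most to `w` and to its predecessor `p`. If `x` has degree 2, then either
`p = v` and `vxw` is a triangle, or `p ∈ S` and `p` is adjacent at most to `x` and to its own
predecessor, which gives a vertex of degree 1 or two adjacent vertices of degree 2.
-/

open Set

namespace SimpleGraph

variable {V : Type*} {G : SimpleGraph V}

lemma degree_eq_one_or_of_forall_adj_eq [Fintype V] [DecidableRel G.Adj] {x a b : V}
    (hx : ∃ y, G.Adj x y) (h : ∀ y, G.Adj x y → y = a ∨ y = b) :
    G.degree x = 1 ∨ (G.degree x = 2 ∧ G.Adj x a ∧ G.Adj x b ∧ a ≠ b) := by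
  classical
  have hsub : G.neighborFinset x ⊆ {a, b} := fun y hy => by
    simpa using h y ((G.mem_neighborFinset x y).1 hy)
  have hpos : 0 < G.degree x := (G.degree_pos_iff_exists_adj x).2 hx
  have hle : G.degree x ≤ ({a, b} : Finset V).card :=
    G.card_neighborFinset_eq_degree x ▸ Finset.card_le_card hsub
  obtain h1 | h2 : G.degree x = 1 ∨ G.degree x = 2 := by
    have := Finset.card_le_two (a := a) (b := b); omega
  · exact Or.inl h1
  · have hab : a ≠ b := by rintro rfl; simp at hle; omega
    have hN : G.neighborFinset x = {a, b} := Finset.eq_of_subset_of_card_le hsub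
      (by rw [G.card_neighborFinset_eq_degree, h2, Finset.card_pair hab])
    refine Or.inr ⟨h2, ?_, ?_, hab⟩ <;> rw [← mem_neighborFinset, hN] <;> simp

variable [LinearOrder V]

lemma mem_Icc_of_adj_of_mem_Ioo
    (hcross : ∀ a b c d, G.Adj a b → G.Adj c d → ¬(a < c ∧ c < b ∧ b < d))
    {v w s y : V} (hvw : G.Adj v w) (hs : s ∈ Ioo v w) (hsy : G.Adj s y) : y ∈ Icc v w := by
  constructor
  · by_contra! h
    exact hcross y s v w hsy.symm hvw ⟨h, hs.1, hs.2⟩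
  · by_contra! h
    exact hcross v w s y hvw hsy ⟨hs.1, hs.2, h⟩

lemma covBy_of_adj {v w a b : V}
    (hmin : ∀ a b, G.Adj a b → Ioo a b ⊂ Ioo v w → Ioo a b = ∅)
    (hab : G.Adj a b) (hlt : a < b) (hva : v ≤ a) (hbw : b ≤ w)
    (hend : a ∈ Ioo v w ∨ b ∈ Ioo v w) : a ⋖ b := by
  refine covBy_iff_Ioo_eq.2 ⟨hlt, hmin a b hab ?_⟩
  refine (ssubset_iff_of_subset (Ioo_subset_Ioo hva hbw)).2 ?_
  rcases hend with ha | hb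
  exacts [⟨a, ha, by simp⟩, ⟨b, hb, by simp⟩]

lemma exists_degree_eq_one_of_forall_Ioo_eq_empty [Fintype V] [DecidableRel G.Adj]
    [Nonempty V] (hne : ∀ v, ∃ w, G.Adj v w) (hgap : ∀ a b, G.Adj a b → Ioo a b = ∅) :
    ∃ u, G.degree u = 1 := by
  obtain ⟨x, hx⟩ := Finite.exists_min (id : V → V)
  obtain ⟨y, hxy⟩ := hne x
  have hlt : ∀ {z}, G.Adj x z → x < z := fun hz => (hx _).lt_of_ne hz.ne
  have hy : ∀ z, G.Adj x z → z = y := by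
    intro z hxz
    by_contra! hzy
    rcases lt_or_gt_of_ne hzy with h | h
    · exact (hgap x y hxy).subset ⟨hlt hxz, h⟩
    · exact (hgap x z hxz).subset ⟨hlt hxy, h⟩
  rcases degree_eq_one_or_of_forall_adj_eq ⟨y, hxy⟩ (fun z hz => .inl (hy z hz)) with h | h
  exacts [⟨x, h⟩, absurd rfl h.2.2.2]

lemma exists_degree_eq_one_or_of_minimal_Ioo [Fintype V] [DecidableRel G.Adj]
    (hcross : ∀ a b c d, G.Adj a b → G.Adj c d → ¬(a < c ∧ c < b ∧ b < d))
    (hne : ∀ v, ∃ w, G.Adj v w) {v w : V} (hvw : G.Adj v w) (hS : (Ioo v w).Nonempty)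
    (hmin : ∀ a b, G.Adj a b → Ioo a b ⊂ Ioo v w → Ioo a b = ∅) :
    (∃ u, G.degree u = 1) ∨
    (∃ u v, G.Adj u v ∧ G.degree u = 2 ∧ G.degree v = 2) ∨
    (∃ u v w, G.degree u = 2 ∧ v ≠ w ∧ G.Adj u v ∧ G.Adj u w ∧ G.Adj v w) := by
  obtain ⟨x, hxS, hxmax⟩ := exists_max_image (Ioo v w) id (toFinite _) hS
  obtain ⟨p, hvp, hpx⟩ := exists_le_covBy_of_lt hxS.1
  have hx : ∀ y, G.Adj x y → y = p ∨ y = w := by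
    intro y hxy
    have hy := mem_Icc_of_adj_of_mem_Ioo hcross hvw hxS hxy
    rcases lt_trichotomy y x with h | rfl | h
    · exact Or.inl ((covBy_of_adj hmin hxy.symm h hy.1 hxS.2.le (.inr hxS)).unique_left hpx)
    · exact (G.irrefl hxy).elim
    · refine Or.inr (hy.2.eq_or_lt.resolve_right fun hyw => ?_)
      exact (hxmax y ⟨hvp.trans_lt (hpx.lt.trans h), hyw⟩).not_gt h
  rcases degree_eq_one_or_of_forall_adj_eq (hne x) hx with hx1 | ⟨hx2, hxp, hxw, -⟩
  · exact Or.inl ⟨x, hx1⟩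
  rcases hvp.eq_or_lt with rfl | hvp
  · exact Or.inr (Or.inr ⟨x, v, w, hx2, (hpx.lt.trans hxS.2).ne, hxp, hxw, hvw⟩)
  have hpS : p ∈ Ioo v w := ⟨hvp, hpx.lt.trans hxS.2⟩
  obtain ⟨q, -, hqp⟩ := exists_le_covBy_of_lt hvp
  have hp : ∀ y, G.Adj p y → y = q ∨ y = x := by
    intro y hpy
    have hy := mem_Icc_of_adj_of_mem_Ioo hcross hvw hpS hpy
    rcases lt_trichotomy y p with h | rfl | h
    · exact Or.inl ((covBy_of_adj hmin hpy.symm h hy.1 hpS.2.le (.inr hpS)).unique_left hqp)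
    · exact (G.irrefl hpy).elim
    · refine Or.inr (le_antisymm ?_ (not_lt.1 fun hyx => hpx.2 h hyx))
      rcases hy.2.eq_or_lt with rfl | hyw
      · exact absurd hxS.2 ((covBy_of_adj hmin hpy h hvp.le le_rfl (.inl hpS)).2 hpx.lt)
      · exact hxmax y ⟨hvp.trans h, hyw⟩
  rcases degree_eq_one_or_of_forall_adj_eq ⟨x, hxp.symm⟩ hp with hp1 | ⟨hp2, -⟩
  · exact Or.inl ⟨p, hp1⟩
  · exact Or.inr (Or.inl ⟨x, p, hxp, hx2, hp2⟩)

theorem exists_degree_eq_one_or_of_noncrossing [Fintype V] [DecidableRel G.Adj] [Nonempty V]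
    (hcross : ∀ a b c d, G.Adj a b → G.Adj c d → ¬(a < c ∧ c < b ∧ b < d))
    (hne : ∀ v, ∃ w, G.Adj v w) :
    (∃ u, G.degree u = 1) ∨
    (∃ u v, G.Adj u v ∧ G.degree u = 2 ∧ G.degree v = 2) ∨
    (∃ u v w, G.degree u = 2 ∧ v ≠ w ∧ G.Adj u v ∧ G.Adj u w ∧ G.Adj v w) := by
  by_cases hgap : ∀ a b, G.Adj a b → Ioo a b = ∅
  · exact Or.inl (exists_degree_eq_one_of_forall_Ioo_eq_empty hne hgap)
  push Not at hgap
  obtain ⟨⟨v, w⟩, ⟨hvw, hS⟩, hmin⟩ := WellFounded.has_min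
    (InvImage.wf (fun e : V × V => Ioo e.1 e.2) wellFounded_lt)
    {e | G.Adj e.1 e.2 ∧ (Ioo e.1 e.2).Nonempty} (let ⟨v, w, h⟩ := hgap; ⟨(v, w), h⟩)
  exact exists_degree_eq_one_or_of_minimal_Ioo hcross hne hvw hS fun a b hab hlt =>
    not_nonempty_iff_eq_empty.1 fun hne' => hmin (a, b) ⟨hab, hne'⟩ hlt

end SimpleGraph

theorem stmt_0_general {V : Type*} [Fintype V] (G : SimpleGraph V)
    [DecidableRel G.Adj] (hconn : G.Connected) (hcard : 2 ≤ Fintype.card V)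
    (hout : Outerplanar G) :
    (∃ u, G.degree u = 1) ∨
    (∃ u v, G.Adj u v ∧ G.degree u = 2 ∧ G.degree v = 2) ∨
    (∃ u v w, G.degree u = 2 ∧ v ≠ w ∧ G.Adj u v ∧ G.Adj u w ∧ G.Adj v w) ∨
    (∃ u, G.degree u = 2 ∧ ¬(G.induce {x | x ≠ u}).Connected) := by
  obtain ⟨f, hinj, hcross⟩ := hout
  have : Nontrivial V := Fintype.one_lt_card_iff_nontrivial.1 hcard
  have hne (v : V) : ∃ w, G.Adj v w :=
    (G.degree_pos_iff_exists_adj v).1 (hconn.preconnected.degree_pos_of_nontrivial v)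
  let : LinearOrder V := LinearOrder.lift' f hinj
  rcases SimpleGraph.exists_degree_eq_one_or_of_noncrossing hcross hne with h | h | h
  exacts [Or.inl h, Or.inr (Or.inl h), Or.inr (Or.inr (Or.inl h))]

/-- Every connected simple outerplanar graph with at least two vertices has a vertex of
degree 1, or two adjacent vertices of degree 2, or a degree-2 vertex whose two neighbors
are adjacent, or a degree-2 vertex whose deletion disconnects the graph. -/
theorem stmt_0 {V : Type*} [Fintype V] [DecidableEq V] (G : SimpleGraph V)
    [DecidableRel G.Adj] (hconn : G.Connected) (hcard : 2 ≤ Fintype.card V)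
    (hout : Outerplanar G) :
    (∃ u, G.degree u = 1) ∨
    (∃ u v, G.Adj u v ∧ G.degree u = 2 ∧ G.degree v = 2) ∨
    (∃ u v w, G.degree u = 2 ∧ v ≠ w ∧ G.Adj u v ∧ G.Adj u w ∧ G.Adj v w) ∨
    (∃ u, G.degree u = 2 ∧ ¬(G.induce {x | x ≠ u}).Connected) :=
  stmt_0_general G hconn hcard hout
end

section
/- Every simple outerplanar graph G admits a (Δ+2, 2)-incidence coloring, where Δ is the maximum degree of G. -/
/-!
Induction on the graph, ordered by `≤`. An outerplanar graph with an edge has a vertex of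
degree one, a vertex of degree two whose neighbours are adjacent, or two adjacent vertices of
degree two: in a one-page book embedding, take a shortest edge `xy` passing over a
non-isolated vertex; the leftmost non-isolated vertex `w` under it has `x` and a single right
neighbour `r`, and either `r = y` or `r` has `w` and a single right neighbour.
Removing the edges at these one or two vertices, colouring the rest by induction and colouring
the at most six new incidences greedily succeeds: a vertex `v` that lost an edge has at most
`deg v - 1 ≤ k - 3` outgoing colours, and either a free incoming colour slot or an incoming
colour that a new incidence can reuse.
-/

open Set SimpleGraph

namespace SimpleGraph

variable {V : Type*}

def isolate (G : SimpleGraph V) (R : Set V) : SimpleGraph V where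
  Adj v w := G.Adj v w ∧ v ∉ R ∧ w ∉ R
  symm := ⟨fun _ _ h => ⟨h.1.symm, h.2.2, h.2.1⟩⟩
  loopless := ⟨fun v h => G.loopless.irrefl v h.1⟩

variable {G : SimpleGraph V} {R : Set V}

@[simp] lemma isolate_adj {v w : V} : (G.isolate R).Adj v w ↔ G.Adj v w ∧ v ∉ R ∧ w ∉ R :=
  Iff.rfl

lemma isolate_le : G.isolate R ≤ G := fun _ _ h => (isolate_adj.1 h).1

lemma isolate_lt {u w : V} (hu : u ∈ R) (huw : G.Adj u w) : G.isolate R < G :=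
  lt_of_le_of_ne isolate_le fun h => (isolate_adj.1 (h.symm ▸ huw)).2.1 hu

lemma ncard_neighborSet_isolate_lt [Finite V] {u v : V} (hu : u ∈ R) (hvu : G.Adj v u) :
    ((G.isolate R).neighborSet v).ncard < (G.neighborSet v).ncard :=
  ncard_lt_ncard ⟨neighborSet_mono isolate_le v, fun h => (isolate_adj.1 (h hvu)).2.2 hu⟩

variable {k : ℕ}

def outColors (G : SimpleGraph V) (c : V → V → Fin k) (v : V) : Set (Fin k) :=
  {x | ∃ w, G.Adj v w ∧ c v w = x}

def inColors (G : SimpleGraph V) (c : V → V → Fin k) (v : V) : Set (Fin k) :=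
  {x | ∃ u, G.Adj u v ∧ c u v = x}

lemma mem_outColors {c : V → V → Fin k} {v w : V} (h : G.Adj v w) : c v w ∈ outColors G c v :=
  ⟨w, h, rfl⟩

lemma mem_inColors {c : V → V → Fin k} {u v : V} (h : G.Adj u v) : c u v ∈ inColors G c v :=
  ⟨u, h, rfl⟩

lemma ncard_outColors_le [Finite V] (c : V → V → Fin k) (v : V) :
    (outColors G c v).ncard ≤ (G.neighborSet v).ncard :=
  ncard_image_le (toFinite _)

lemma ncard_inColors_le [Finite V] (c : V → V → Fin k) (v : V) :
    (inColors G c v).ncard ≤ (G.neighborSet v).ncard := by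
  have : inColors G c v = (c · v) '' G.neighborSet v := by
    ext; simp [inColors, adj_comm]
  exact this ▸ ncard_image_le (toFinite _)

end SimpleGraph

namespace Fin

variable {k : ℕ}

lemma exists_notMem_of_ncard_lt {s : Set (Fin k)} (h : s.ncard < k) : ∃ x, x ∉ s := by
  by_contra! hs
  rw [eq_univ_of_forall hs, ncard_univ, Nat.card_eq_fintype_card, Fintype.card_fin] at h
  exact h.false

lemma exists_ne_ne_ne (hk : 4 ≤ k) (a b c : Fin k) : ∃ x, x ≠ a ∧ x ≠ b ∧ x ≠ c := by
  obtain ⟨x, -, hx⟩ := Finset.exists_mem_notMem_of_card_lt_card (s := {a, b, c})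
    (t := Finset.univ) (Finset.card_le_three.trans_lt (by simp; omega))
  simp only [Finset.mem_insert, Finset.mem_singleton, not_or] at hx
  exact ⟨x, hx⟩

lemma exists_ne_ne_ne_ne (hk : 5 ≤ k) (a b c d : Fin k) :
    ∃ x, x ≠ a ∧ x ≠ b ∧ x ≠ c ∧ x ≠ d := by
  obtain ⟨x, -, hx⟩ := Finset.exists_mem_notMem_of_card_lt_card (s := {a, b, c, d})
    (t := Finset.univ) (Finset.card_le_four.trans_lt (by simp; omega))
  simp only [Finset.mem_insert, Finset.mem_singleton, not_or] at hx
  exact ⟨x, hx⟩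

end Fin

/-- The colours `O` leaving and `S` entering a vertex that has lost an edge, in a
`(k, 2)`-incidence colouring with `k` at least the maximum degree plus two. -/
structure BoundaryPalette (k : ℕ) (O S : Set (Fin k)) : Prop where
  disjoint : Disjoint S O
  ncard_in_le_two : S.ncard ≤ 2
  ncard_out_add_three_le : O.ncard + 3 ≤ k
  ncard_in_add_three_le : S.ncard + 3 ≤ k

namespace BoundaryPalette

variable {k : ℕ} {O S T : Set (Fin k)}

lemma exists_notMem_notMem (h : BoundaryPalette k O S) (hT : T.ncard ≤ 2) :
    ∃ x, x ∉ O ∧ x ∉ T := by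
  obtain ⟨x, hx⟩ := Fin.exists_notMem_of_ncard_lt
    ((ncard_union_le O T).trans_lt (by linarith [h.ncard_out_add_three_le]))
  exact ⟨x, fun h => hx (Or.inl h), fun h => hx (Or.inr h)⟩

lemma exists_ncard_insert_le_two (h : BoundaryPalette k O S) :
    ∃ x, x ∉ O ∧ (insert x S).ncard ≤ 2 := by
  rcases S.eq_empty_or_nonempty with rfl | ⟨x, hx⟩
  · obtain ⟨x, hx, -⟩ := h.exists_notMem_notMem (T := ∅) (by simp)
    exact ⟨x, hx, by simp⟩
  · refine ⟨x, h.disjoint.notMem_of_mem_left hx, ?_⟩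
    rw [insert_eq_of_mem hx]
    exact h.ncard_in_le_two

/-- Colours for the incidences of a path `a u₁ u₂ b` whose inner vertices `u₁, u₂` are
recoloured: `α, β` on `(a, au₁), (u₁, u₁a)`, then `γ, δ` on `(u₁, u₁u₂), (u₂, u₂u₁)`, then
`ε, ζ` on `(u₂, u₂b), (b, bu₂)`. -/
lemma exists_path_colors {Oa Sa Ob Sb : Set (Fin k)} (hk : 4 ≤ k)
    (ha : BoundaryPalette k Oa Sa) (hb : BoundaryPalette k Ob Sb) :
    ∃ α β γ δ ε ζ : Fin k, α ∉ Oa ∧ α ∉ Sa ∧ β ∉ Oa ∧ (insert β Sa).ncard ≤ 2 ∧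
      ε ∉ Ob ∧ (insert ε Sb).ncard ≤ 2 ∧ ζ ∉ Ob ∧ ζ ∉ Sb ∧
      α ≠ β ∧ α ≠ γ ∧ β ≠ γ ∧ β ≠ δ ∧ γ ≠ δ ∧ γ ≠ ε ∧ δ ≠ ε ∧ δ ≠ ζ ∧ ε ≠ ζ := by
  obtain ⟨β, hβO, hβS⟩ := ha.exists_ncard_insert_le_two
  obtain ⟨α, hαO, hα⟩ := ha.exists_notMem_notMem hβS
  rw [mem_insert_iff, not_or] at hα
  by_cases hαOb : α ∈ Ob
  · obtain ⟨ε, hεO, hεS⟩ := hb.exists_ncard_insert_le_two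
    obtain ⟨ζ, hζO, hζ⟩ := hb.exists_notMem_notMem hεS
    rw [mem_insert_iff, not_or] at hζ
    obtain ⟨γ, hγ⟩ := Fin.exists_ne_ne_ne hk α β ε
    refine ⟨α, β, γ, α, ε, ζ, ?_⟩
    grind
  by_cases hαSb : (insert α Sb).ncard ≤ 2
  · obtain ⟨ζ, hζO, hζ⟩ := hb.exists_notMem_notMem hαSb
    rw [mem_insert_iff, not_or] at hζ
    obtain ⟨δ, hδ⟩ := Fin.exists_ne_ne_ne hk β α ζ
    obtain ⟨γ, hγ⟩ := Fin.exists_ne_ne_ne hk α β δ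
    refine ⟨α, β, γ, δ, α, ζ, ?_⟩
    grind
  · have hk5 : 5 ≤ k := by
      have := ncard_insert_le α Sb
      have := hb.ncard_in_add_three_le
      omega
    obtain ⟨ε, hεO, hεS⟩ := hb.exists_ncard_insert_le_two
    obtain ⟨ζ, hζO, hζ⟩ := hb.exists_notMem_notMem hεS
    rw [mem_insert_iff, not_or] at hζ
    obtain ⟨δ, hδ⟩ := Fin.exists_ne_ne_ne hk β ε ζ
    obtain ⟨γ, hγ⟩ := Fin.exists_ne_ne_ne_ne hk5 α β δ ε
    refine ⟨α, β, γ, δ, ε, ζ, ?_⟩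
    grind

end BoundaryPalette

namespace IsIncColoring

variable {V : Type*} {k : ℕ} {G H : SimpleGraph V} {R : Set V} {c d : V → V → Fin k}

lemma disjoint_inColors_outColors {l : ℕ} (hc : IsIncColoring G k l c) (v : V) :
    Disjoint (inColors G c v) (outColors G c v) := by
  rw [Set.disjoint_left]
  rintro _ ⟨u, hu, rfl⟩ ⟨w, hw, h⟩
  exact hc.1 u v v w hu hw (fun h => hu.ne (congrArg Prod.fst h)) (Or.inr (Or.inl rfl)) h.symm

lemma boundaryPalette [Finite V] (hc : IsIncColoring H k 2 c)
    (hk : ∀ v, (G.neighborSet v).ncard + 2 ≤ k) {v : V}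
    (hv : (H.neighborSet v).ncard < (G.neighborSet v).ncard) :
    BoundaryPalette k (outColors H c v) (inColors H c v) where
  disjoint := hc.disjoint_inColors_outColors v
  ncard_in_le_two := hc.2 v
  ncard_out_add_three_le := by linarith [ncard_outColors_le (G := H) c v, hk v]
  ncard_in_add_three_le := by linarith [ncard_inColors_le (G := H) c v, hk v]

theorem piecewise [Finite V] [DecidablePred (· ∈ R)] (hc : IsIncColoring (G.isolate R) k 2 c)
    (hnew : ∀ v w v' w', G.Adj v w → G.Adj v' w' → (v ∈ R ∨ w ∈ R) → (v' ∈ R ∨ w' ∈ R) →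
      (v, w) ≠ (v', w') → (v = v' ∨ w = v' ∨ v = w') → d v w ≠ d v' w')
    (hout : ∀ u v, G.Adj u v → u ∈ R → v ∉ R → d u v ∉ outColors (G.isolate R) c v)
    (hin : ∀ u v, G.Adj v u → u ∈ R → v ∉ R →
      d v u ∉ outColors (G.isolate R) c v ∧ d v u ∉ inColors (G.isolate R) c v)
    (hdeg : ∀ u ∈ R, (G.neighborSet u).ncard ≤ 2)
    (hbdry : ∀ u v, G.Adj u v → u ∈ R → v ∉ R →
      (∀ u' ∈ R, G.Adj u' v → u' = u) ∧ (insert (d u v) (inColors (G.isolate R) c v)).ncard ≤ 2) :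
    IsIncColoring G k 2 (fun v w => if v ∈ R ∨ w ∈ R then d v w else c v w) := by
  have hmix : ∀ v w v' w', G.Adj v w → (v ∈ R ∨ w ∈ R) → (G.isolate R).Adj v' w' →
      (v = v' ∨ w = v' ∨ v = w') → d v w ≠ c v' w' := by
    rintro v w v' w' hvw hR hvw' hrel
    obtain ⟨-, hv', hw'⟩ := isolate_adj.1 hvw'
    by_cases hv : v ∈ R
    · obtain rfl : w = v' := by
        rcases hrel with rfl | h | rfl
        exacts [absurd hv hv', h, absurd hv hw']
      exact fun h => hout v w hvw hv hv' (h ▸ mem_outColors hvw')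
    · have hw : w ∈ R := hR.resolve_left hv
      obtain ⟨hO, hI⟩ := hin w v hvw hw hv
      rcases hrel with rfl | rfl | rfl
      · exact fun h => hO (h ▸ mem_outColors hvw')
      · exact absurd hw hv'
      · exact fun h => hI (h ▸ mem_inColors hvw')
  refine ⟨fun v w v' w' h h' hne hrel => ?_, fun v => ?_⟩
  · dsimp only
    by_cases hR : v ∈ R ∨ w ∈ R <;> by_cases hR' : v' ∈ R ∨ w' ∈ R
    · rw [if_pos hR, if_pos hR']
      exact hnew v w v' w' h h' hR hR' hne hrel
    · rw [if_pos hR, if_neg hR']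
      exact hmix v w v' w' h hR ⟨h', not_or.1 hR'⟩ hrel
    · rw [if_neg hR, if_pos hR']
      exact (hmix v' w' v w h' hR' ⟨h, not_or.1 hR⟩ (by tauto)).symm
    · rw [if_neg hR, if_neg hR']
      exact hc.1 v w v' w' ⟨h, not_or.1 hR⟩ ⟨h', not_or.1 hR'⟩ hne hrel
  by_cases hv : v ∈ R
  · exact (ncard_inColors_le (G := G) (fun v w => if v ∈ R ∨ w ∈ R then d v w else c v w) v).trans
      (hdeg v hv)
  by_cases hbd : ∃ u ∈ R, G.Adj u v
  · obtain ⟨u, hu, huv⟩ := hbd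
    obtain ⟨huniq, hcard⟩ := hbdry u v huv hu hv
    refine (ncard_le_ncard ?_).trans hcard
    rintro _ ⟨t, ht, rfl⟩
    by_cases htR : t ∈ R
    · obtain rfl := huniq t htR ht
      simp [htR]
    · exact Or.inr ⟨t, ⟨ht, htR, hv⟩, by simp [htR, hv]⟩
  · push Not at hbd
    refine (ncard_le_ncard ?_).trans (hc.2 v)
    rintro _ ⟨t, ht, rfl⟩
    have htR : t ∉ R := fun h => hbd t h ht
    exact ⟨t, ⟨ht, htR, hv⟩, by simp [htR, hv]⟩

end IsIncColoring

section Configurations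

variable {V : Type*} [Finite V] {k : ℕ} {G : SimpleGraph V}

theorem hasIncColoring_of_pendant {u a : V} (hk : ∀ v, (G.neighborSet v).ncard + 2 ≤ k)
    (hu : G.neighborSet u = {a}) (hc : HasIncColoring (G.isolate {u}) k 2) :
    HasIncColoring G k 2 := by
  classical
  obtain ⟨c, hc⟩ := hc
  have hadj : ∀ {w}, G.Adj u w ↔ w = a := by
    intro w; rw [← mem_neighborSet, hu, mem_singleton_iff]
  have hua : G.Adj u a := hadj.2 rfl
  have ha := hc.boundaryPalette hk (ncard_neighborSet_isolate_lt rfl hua.symm)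
  obtain ⟨q, hqO, hqS⟩ := ha.exists_ncard_insert_le_two
  obtain ⟨p, hpO, hp⟩ := ha.exists_notMem_notMem hqS
  rw [mem_insert_iff, not_or] at hp
  refine ⟨_, hc.piecewise (d := fun v _ => if v = u then q else p) ?_ ?_ ?_ ?_ ?_⟩
  · rintro v w v' w' h h' (rfl | rfl) (rfl | rfl) hne hrel <;>
      grind
  · rintro _ v h rfl -
    obtain rfl := hadj.1 h
    simpa using hqO
  · rintro _ v h rfl -
    obtain rfl := hadj.1 h.symm
    simpa [hua.ne'] using ⟨hpO, hp.2⟩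
  · rintro _ rfl
    simp [hu]
  · rintro _ v h rfl -
    obtain rfl := hadj.1 h
    exact ⟨fun _ h _ => h, by simpa using hqS⟩

theorem hasIncColoring_of_triangle {u a b : V} (hk : ∀ v, (G.neighborSet v).ncard + 2 ≤ k)
    (hu : G.neighborSet u = {a, b}) (hab : G.Adj a b) (hc : HasIncColoring (G.isolate {u}) k 2) :
    HasIncColoring G k 2 := by
  classical
  obtain ⟨c, hc⟩ := hc
  have hadj : ∀ {w}, G.Adj u w ↔ w = a ∨ w = b := by
    intro w; rw [← mem_neighborSet, hu, mem_insert_iff, mem_singleton_iff]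
  have hua : G.Adj u a := hadj.2 (Or.inl rfl)
  have hub : G.Adj u b := hadj.2 (Or.inr rfl)
  have hab' : (G.isolate {u}).Adj a b := ⟨hab, hua.ne', hub.ne'⟩
  have ha := hc.boundaryPalette hk (ncard_neighborSet_isolate_lt rfl hua.symm)
  have hb := hc.boundaryPalette hk (ncard_neighborSet_isolate_lt rfl hub.symm)
  -- the colours of `(b, ba)` and `(a, ab)` are reused on `(u, ua)` and `(u, ub)`
  set q := c b a
  set r := c a b
  have hqS : q ∈ inColors (G.isolate {u}) c a := mem_inColors hab'.symm
  have hqO : q ∈ outColors (G.isolate {u}) c b := mem_outColors hab'.symm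
  have hrS : r ∈ inColors (G.isolate {u}) c b := mem_inColors hab'
  have hrO : r ∈ outColors (G.isolate {u}) c a := mem_outColors hab'
  have hqr : q ≠ r :=
    hc.1 b a a b hab'.symm hab' (fun h => hab.ne' (congrArg Prod.fst h)) (Or.inr (Or.inl rfl))
  obtain ⟨p, hpO, hpS⟩ := ha.exists_notMem_notMem ha.ncard_in_le_two
  obtain ⟨s, hsO, hsS⟩ := hb.exists_notMem_notMem hb.ncard_in_le_two
  have hqOa := ha.disjoint.notMem_of_mem_left hqS
  have hrOb := hb.disjoint.notMem_of_mem_left hrS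
  have hpq : p ≠ q := fun h => hpS (h ▸ hqS)
  have hpr : p ≠ r := fun h => hpO (h ▸ hrO)
  have hsq : s ≠ q := fun h => hsO (h ▸ hqO)
  have hsr : s ≠ r := fun h => hsS (h ▸ hrS)
  refine ⟨_, hc.piecewise
    (d := fun v w => if v = u then (if w = a then q else r) else if v = a then p else s)
    ?_ ?_ ?_ ?_ ?_⟩
  · have hab_ne := hab.ne
    rintro v w v' w' h h' (rfl | rfl) (rfl | rfl) hne hrel <;>
      grind [adj_comm]
  · rintro _ v h rfl -
    rcases hadj.1 h with rfl | rfl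
    · simpa using hqOa
    · simpa [hab.ne'] using hrOb
  · rintro _ v h rfl -
    rcases hadj.1 h.symm with rfl | rfl
    · simpa [hua.ne'] using ⟨hpO, hpS⟩
    · simpa [hub.ne', hab.ne'] using ⟨hsO, hsS⟩
  · rintro _ rfl
    simp only [hu]
    exact (ncard_insert_le _ _).trans (by simp)
  · rintro _ v h rfl -
    refine ⟨fun _ h _ => h, ?_⟩
    rcases hadj.1 h with rfl | rfl
    · simpa [insert_eq_of_mem hqS] using ha.ncard_in_le_two
    · simpa [hab.ne', insert_eq_of_mem hrS] using hb.ncard_in_le_two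

theorem hasIncColoring_of_path {u₁ u₂ a b : V} (hk : ∀ v, (G.neighborSet v).ncard + 2 ≤ k)
    (hu₁ : G.neighborSet u₁ = {a, u₂}) (hu₂ : G.neighborSet u₂ = {u₁, b})
    (hab : a ≠ b) (hau₂ : a ≠ u₂) (hbu₁ : b ≠ u₁)
    (hc : HasIncColoring (G.isolate {u₁, u₂}) k 2) :
    HasIncColoring G k 2 := by
  classical
  obtain ⟨c, hc⟩ := hc
  have hadj₁ : ∀ {w}, G.Adj u₁ w ↔ w = a ∨ w = u₂ := by
    intro w; rw [← mem_neighborSet, hu₁, mem_insert_iff, mem_singleton_iff]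
  have hadj₂ : ∀ {w}, G.Adj u₂ w ↔ w = u₁ ∨ w = b := by
    intro w; rw [← mem_neighborSet, hu₂, mem_insert_iff, mem_singleton_iff]
  have hu₁a : G.Adj u₁ a := hadj₁.2 (Or.inl rfl)
  have hu₂b : G.Adj u₂ b := hadj₂.2 (Or.inr rfl)
  have hu₁u₂ : G.Adj u₁ u₂ := hadj₁.2 (Or.inr rfl)
  have hk4 : 4 ≤ k := by
    have := hk u₁
    rw [hu₁, ncard_pair hau₂] at this
    omega
  obtain ⟨α, β, γ, δ, ε, ζ, hαO, hαS, hβO, hβS, hεO, hεS, hζO, hζS, hαβ, hαγ, hβγ, hβδ, hγδ,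
      hγε, hδε, hδζ, hεζ⟩ := BoundaryPalette.exists_path_colors hk4
    (hc.boundaryPalette hk (ncard_neighborSet_isolate_lt (.inl rfl) hu₁a.symm))
    (hc.boundaryPalette hk (ncard_neighborSet_isolate_lt (.inr rfl) hu₂b.symm))
  refine ⟨_, hc.piecewise
    (d := fun v w => if v = a then α else if v = u₁ then (if w = a then β else γ)
      else if v = u₂ then (if w = u₁ then δ else ε) else ζ)
    ?_ ?_ ?_ ?_ ?_⟩
  · have hu₁a_ne := hu₁a.ne
    have hu₂b_ne := hu₂b.ne
    have hu₁u₂_ne := hu₁u₂.ne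
    rintro v w v' w' h h' ((rfl | rfl) | (rfl | rfl)) ((rfl | rfl) | (rfl | rfl)) hne hrel <;>
      grind [adj_comm]
  · rintro _ v h (rfl | rfl) hv <;> simp only [mem_insert_iff, mem_singleton_iff, not_or] at hv
    · obtain rfl := (hadj₁.1 h).resolve_right hv.2
      simpa [hu₁a.ne] using hβO
    · obtain rfl := (hadj₂.1 h).resolve_left hv.1
      simpa [hau₂.symm, hu₁u₂.ne', hbu₁] using hεO
  · rintro _ v h (rfl | rfl) hv <;> simp only [mem_insert_iff, mem_singleton_iff, not_or] at hv
    · obtain rfl := (hadj₁.1 h.symm).resolve_right hv.2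
      simpa using ⟨hαO, hαS⟩
    · obtain rfl := (hadj₂.1 h.symm).resolve_left hv.1
      simpa [hab.symm, hbu₁, hu₂b.ne'] using ⟨hζO, hζS⟩
  · rintro _ (rfl | rfl) <;> simp only [hu₁, hu₂] <;> exact (ncard_insert_le _ _).trans (by simp)
  · rintro _ v h (rfl | rfl) hv <;> simp only [mem_insert_iff, mem_singleton_iff, not_or] at hv
    · obtain rfl := (hadj₁.1 h).resolve_right hv.2
      refine ⟨?_, by simpa [hu₁a.ne] using hβS⟩
      rintro _ (rfl | rfl) h' <;> grind
    · obtain rfl := (hadj₂.1 h).resolve_left hv.1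
      refine ⟨?_, by simpa [hau₂.symm, hu₁u₂.ne', hbu₁] using hεS⟩
      rintro _ (rfl | rfl) h' <;> grind

end Configurations

namespace SimpleGraph

variable {V : Type*} {G H : SimpleGraph V} {f : V → ℝ}

def IsBookEmbedding (G : SimpleGraph V) (f : V → ℝ) : Prop :=
  Function.Injective f ∧
    ∀ a b c d, G.Adj a b → G.Adj c d → ¬(f a < f c ∧ f c < f b ∧ f b < f d)

lemma IsBookEmbedding.mono (h : G.IsBookEmbedding f) (hle : H ≤ G) : H.IsBookEmbedding f :=
  ⟨h.1, fun a b c d hab hcd => h.2 a b c d (hle hab) (hle hcd)⟩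

lemma _root_.Outerplanar.mono (h : Outerplanar G) (hle : H ≤ G) : Outerplanar H :=
  let ⟨f, hf⟩ := h
  ⟨f, IsBookEmbedding.mono hf hle⟩

lemma IsBookEmbedding.mem_Icc_of_adj (h : G.IsBookEmbedding f) {x y w s : V} (hxy : G.Adj x y)
    (hw : f w ∈ Ioo (f x) (f y)) (hws : G.Adj w s) : f s ∈ Icc (f x) (f y) := by
  by_contra hs
  rw [mem_Icc, not_and_or, not_le, not_le] at hs
  rcases hs with hs | hs
  · exact h.2 s w x y hws.symm hxy ⟨hs, hw.1, hw.2⟩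
  · exact h.2 x y w s hxy hws ⟨hw.1, hw.2, hs⟩

lemma neighborSet_eq_pair_of_forall (hf : Function.Injective f) {v l : V}
    (h2 : 1 < (G.neighborSet v).ncard) (hleft : ∀ s, G.Adj v s → f s < f v → s = l)
    (hright : ∀ r r', G.Adj v r → G.Adj v r' → f v < f r → f v < f r' → r = r') :
    ∃ r, f v < f r ∧ G.neighborSet v = {l, r} := by
  obtain ⟨p, hp, q, hq, hpq⟩ := (one_lt_ncard (finite_of_ncard_pos (by omega))).1 h2
  have hside : ∀ s, G.Adj v s → s = l ∨ f v < f s := fun s hs =>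
    (lt_or_gt_of_ne fun h => hs.ne (hf h).symm).imp (hleft s hs) id
  have hl : G.Adj v l := by
    by_contra hl
    have hp' := (hside p hp).resolve_left (by rintro rfl; exact hl hp)
    have hq' := (hside q hq).resolve_left (by rintro rfl; exact hl hq)
    exact hpq (hright p q hp hq hp' hq')
  obtain ⟨r, hr, hfr⟩ : ∃ r, G.Adj v r ∧ f v < f r := by
    by_cases hpl : p = l
    · exact ⟨q, hq, (hside q hq).resolve_left fun h => hpq (hpl.trans h.symm)⟩
    · exact ⟨p, hp, (hside p hp).resolve_left hpl⟩
  refine ⟨r, hfr, Set.ext fun s => ⟨fun hs => ?_, ?_⟩⟩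
  · rcases hside s hs with rfl | hs'
    · exact .inl rfl
    · exact .inr (hright s r hs hr hs' hfr)
  · rintro (rfl | rfl)
    exacts [hl, hr]

def IsNest (G : SimpleGraph V) (f : V → ℝ) (x y : V) : Prop :=
  G.Adj x y ∧ ∃ w ∈ G.support, f w ∈ Ioo (f x) (f y)

lemma IsBookEmbedding.eq_of_adj_of_isNest_minimal (h : G.IsBookEmbedding f) {x y : V}
    (hxy : G.Adj x y) (hmin : ∀ p q, G.IsNest f p q → f y - f x ≤ f q - f p) {m r r' : V}
    (hm : f m ∈ Ioo (f x) (f y)) (hr : G.Adj m r) (hr' : G.Adj m r') (hfr : f m < f r)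
    (hfr' : f m < f r') : r = r' := by
  -- otherwise the longer of the edges `mr`, `mr'` is a nest shorter than `xy`
  suffices ∀ r r', G.Adj m r → G.Adj m r' → f m < f r → f r < f r' → False by
    by_contra hne
    rcases lt_or_gt_of_ne (h.1.ne hne) with hlt | hlt
    exacts [this r r' hr hr' hfr hlt, this r' r hr' hr hfr' hlt]
  intro r r' hr hr' hfr hfrr'
  have := hmin m r' ⟨hr', r, G.mem_support.2 ⟨m, hr.symm⟩, hfr, hfrr'⟩
  linarith [hm.1, (h.mem_Icc_of_adj hxy hm hr').2]

variable [Finite V]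

lemma one_lt_ncard_neighborSet (hdeg : ∀ v, (G.neighborSet v).ncard ≠ 1) {v : V}
    (hv : v ∈ G.support) : 1 < (G.neighborSet v).ncard := by
  have hpos : 0 < (G.neighborSet v).ncard := (ncard_pos (toFinite _)).2 (G.mem_support.1 hv)
  have := hdeg v
  omega

lemma IsBookEmbedding.exists_isNest_minimal (h : G.IsBookEmbedding f)
    (hdeg : ∀ v, (G.neighborSet v).ncard ≠ 1) {u w : V} (huw : G.Adj u w) :
    ∃ x y, G.IsNest f x y ∧ ∀ p q, G.IsNest f p q → f y - f x ≤ f q - f p := by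
  obtain ⟨x₀, hx₀, hmin⟩ :=
    G.support.exists_min_image f (toFinite _) ⟨u, G.mem_support.2 ⟨w, huw⟩⟩
  obtain ⟨p, hp, q, hq, hpq⟩ := (one_lt_ncard (toFinite _)).1 (one_lt_ncard_neighborSet hdeg hx₀)
  have hright : ∀ s, G.Adj x₀ s → f x₀ < f s := fun s hs =>
    (hmin s (G.mem_support.2 ⟨x₀, hs.symm⟩)).lt_of_ne fun he => hs.ne (h.1 he)
  -- the leftmost non-isolated vertex sees two vertices to its right; the farther edge is a nest
  have hne : {e : V × V | G.IsNest f e.1 e.2}.Nonempty := by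
    rcases lt_or_gt_of_ne (h.1.ne hpq) with hlt | hlt
    · exact ⟨(x₀, q), hq, p, G.mem_support.2 ⟨x₀, hp.symm⟩, hright p hp, hlt⟩
    · exact ⟨(x₀, p), hp, q, G.mem_support.2 ⟨x₀, hq.symm⟩, hright q hq, hlt⟩
  obtain ⟨⟨x, y⟩, hxy, hmin⟩ := exists_min_image _ (fun e => f e.2 - f e.1) (toFinite _) hne
  exact ⟨x, y, hxy, fun p q hpq => hmin (p, q) hpq⟩

theorem IsBookEmbedding.exists_reducible (h : G.IsBookEmbedding f)
    (hdeg : ∀ v, (G.neighborSet v).ncard ≠ 1) {u w : V} (huw : G.Adj u w) :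
    (∃ u a b, G.Adj a b ∧ G.neighborSet u = {a, b}) ∨
      ∃ u₁ u₂ a b, a ≠ b ∧ a ≠ u₂ ∧ b ≠ u₁ ∧
        G.neighborSet u₁ = {a, u₂} ∧ G.neighborSet u₂ = {u₁, b} := by
  obtain ⟨x, y, ⟨hxy, hnest⟩, hmin⟩ := h.exists_isNest_minimal hdeg huw
  obtain ⟨w₁, ⟨hw₁, hw₁I⟩, hw₁min⟩ :=
    exists_min_image {s | s ∈ G.support ∧ f s ∈ Ioo (f x) (f y)} f (toFinite _) hnest
  have hleft₁ : ∀ s, G.Adj w₁ s → f s < f w₁ → s = x := by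
    intro s hs hfs
    have hsx : f x ≤ f s := (h.mem_Icc_of_adj hxy hw₁I hs).1
    refine h.1 (le_antisymm (not_lt.1 fun hlt => ?_) hsx)
    exact (hw₁min s ⟨G.mem_support.2 ⟨w₁, hs.symm⟩, hlt, hfs.trans hw₁I.2⟩).not_gt hfs
  obtain ⟨r₁, hfr₁, hN₁⟩ := neighborSet_eq_pair_of_forall h.1 (one_lt_ncard_neighborSet hdeg hw₁)
    hleft₁ fun _ _ => h.eq_of_adj_of_isNest_minimal hxy hmin hw₁I
  have hw₁r₁ : G.Adj w₁ r₁ := by simp [← mem_neighborSet, hN₁]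
  rcases (h.mem_Icc_of_adj hxy hw₁I hw₁r₁).2.eq_or_lt with heq | hlt
  · obtain rfl := h.1 heq
    exact .inl ⟨w₁, x, r₁, hxy, hN₁⟩
  have hr₁I : f r₁ ∈ Ioo (f x) (f y) := ⟨hw₁I.1.trans hfr₁, hlt⟩
  have hleft₂ : ∀ s, G.Adj r₁ s → f s < f r₁ → s = w₁ := by
    intro s hs hfs
    have hsx : f x ≤ f s := (h.mem_Icc_of_adj hxy hr₁I hs).1
    rcases lt_trichotomy (f s) (f w₁) with hlt' | heq' | hgt
    · have := hmin s r₁ ⟨hs.symm, w₁, hw₁, hlt', hfr₁⟩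
      linarith
    · exact h.1 heq'
    · have := hmin w₁ r₁ ⟨hw₁r₁, s, G.mem_support.2 ⟨r₁, hs.symm⟩, hgt, hfs⟩
      linarith [hw₁I.1]
  obtain ⟨r₂, hfr₂, hN₂⟩ := neighborSet_eq_pair_of_forall h.1
    (one_lt_ncard_neighborSet hdeg (G.mem_support.2 ⟨w₁, hw₁r₁.symm⟩)) hleft₂
    fun _ _ => h.eq_of_adj_of_isNest_minimal hxy hmin hr₁I
  have hxr₁ : f x < f r₁ := hw₁I.1.trans hfr₁
  exact .inr ⟨w₁, r₁, x, r₂, ne_of_apply_ne f (hxr₁.trans hfr₂).ne, ne_of_apply_ne f hxr₁.ne,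
    ne_of_apply_ne f (hfr₁.trans hfr₂).ne', hN₁, hN₂⟩

end SimpleGraph

theorem hasIncColoring_of_outerplanar {V : Type*} [Finite V] {G : SimpleGraph V}
    (hG : Outerplanar G) {k : ℕ} (hk : ∀ v, (G.neighborSet v).ncard + 2 ≤ k) :
    HasIncColoring G k 2 := by
  induction G using WellFoundedLT.induction with | _ G ih
  have hsub : ∀ R u w, u ∈ R → G.Adj u w → HasIncColoring (G.isolate R) k 2 :=
    fun R u w hu huw => ih _ (isolate_lt hu huw) (hG.mono isolate_le) fun v =>
      (Nat.add_le_add_right (ncard_le_ncard (neighborSet_mono isolate_le v)) 2).trans (hk v)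
  by_cases hedge : ∃ u w, G.Adj u w
  swap
  · push Not at hedge
    exact ⟨fun v _ => ⟨0, by linarith [hk v]⟩, fun v w _ _ h => absurd h (hedge v w),
      fun v => by simp [hedge]⟩
  obtain ⟨u, w, huw⟩ := hedge
  by_cases hpendant : ∃ u, (G.neighborSet u).ncard = 1
  · obtain ⟨u, hu⟩ := hpendant
    obtain ⟨a, ha⟩ := ncard_eq_one.1 hu
    exact hasIncColoring_of_pendant hk ha (hsub {u} u a rfl (by simp [← mem_neighborSet, ha]))
  push Not at hpendant
  obtain ⟨f, hf⟩ : ∃ f, G.IsBookEmbedding f := hG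
  rcases hf.exists_reducible hpendant huw with
    ⟨u, a, b, hab, hu⟩ | ⟨u₁, u₂, a, b, hab, hau₂, hbu₁, hu₁, hu₂⟩
  · exact hasIncColoring_of_triangle hk hu hab
      (hsub {u} u a rfl (by simp [← mem_neighborSet, hu]))
  · exact hasIncColoring_of_path hk hu₁ hu₂ hab hau₂ hbu₁
      (hsub _ u₁ a (.inl rfl) (by simp [← mem_neighborSet, hu₁]))

/-- Every simple outerplanar graph admits a (Δ+2, 2)-incidence coloring. -/
theorem stmt_1 {V : Type*} [Fintype V] (G : SimpleGraph V) [DecidableRel G.Adj]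
    (hout : Outerplanar G) : HasIncColoring G (G.maxDegree + 2) 2 :=
  hasIncColoring_of_outerplanar hout fun v => by
    rw [← Nat.card_coe_set_eq, Nat.card_eq_fintype_card, card_neighborSet_eq_degree]
    exact Nat.add_le_add_right (G.degree_le_maxDegree v) 2
end

section
/- Every simple graph with maximum degree Δ ≤ 2 admits a (Δ+2, 2)-incidence coloring. -/
def Fc (n i : ℕ) : ℕ :=
  if n % 3 = 0 ∨ i + 2 < n then i % 3
  else if i + 2 = n then 3
  else if n % 3 = 1 then 2 else 1

def Bc (n i : ℕ) : ℕ :=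
  if n % 3 = 0 ∨ i + 2 < n then (i + 2) % 3
  else if i + 2 = n then (if n % 3 = 1 then 1 else 2)
  else 3

theorem Fc_lt (n i : ℕ) : Fc n i < 4 := by unfold Fc; split_ifs <;> omega

theorem Bc_lt (n i : ℕ) : Bc n i < 4 := by unfold Bc; split_ifs <;> omega

theorem seq_constraints (n : ℕ) (hn : 3 ≤ n) (i : ℕ) (hi : i < n) :
    Fc n i ≠ Bc n i ∧ Fc n ((i+1) % n) ≠ Fc n i ∧ Bc n ((i+1) % n) ≠ Bc n i ∧
      Fc n ((i+1) % n) ≠ Bc n i := by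
  have hmod : (i+1) % n = if i + 1 = n then 0 else i + 1 := by
    split_ifs with h
    · simp [h]
    · exact Nat.mod_eq_of_lt (by omega)
  rw [hmod]
  unfold Fc Bc
  split_ifs <;> omega

private def Proper {V : Type*} (G : SimpleGraph V) (c : V → V → Fin 4) : Prop :=
  ∀ v w v' w', G.Adj v w → G.Adj v' w' → (v, w) ≠ (v', w') →
      (v = v' ∨ w = v' ∨ v = w') → c v w ≠ c v' w'

private lemma fin4_avoid : ∀ x y z : Fin 4, ∃ t : Fin 4, t ≠ x ∧ t ≠ y ∧ t ≠ z := by decide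

private lemma deg1Case {V : Type*} [Fintype V]
    (N : ℕ)
    (ih : ∀ (G : SimpleGraph V), G.edgeSet.ncard ≤ N →
      (∀ v a b c, G.Adj v a → G.Adj v b → G.Adj v c → a = b ∨ a = c ∨ b = c) →
      ∃ c, Proper G c)
    (G : SimpleGraph V) (hcard : G.edgeSet.ncard ≤ N + 1)
    (hdeg : ∀ v a b c, G.Adj v a → G.Adj v b → G.Adj v c → a = b ∨ a = c ∨ b = c)
    (hdeg1 : ∃ v a, G.Adj v a ∧ ∀ b, G.Adj v b → b = a) :
    ∃ c, Proper G c := by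
  classical
  obtain ⟨v, a, hva, huniqv⟩ := hdeg1
  set G' : SimpleGraph V := G.deleteEdges {s(v, a)} with hG'
  have hG'adj : ∀ x y, G'.Adj x y ↔ G.Adj x y ∧ ¬(x = v ∧ y = a) ∧ ¬(x = a ∧ y = v) := by
    intro x y
    rw [hG', SimpleGraph.deleteEdges_adj]
    simp only [Set.mem_singleton_iff, Sym2.eq_iff]
    tauto
  have hfin : G.edgeSet.Finite := Set.toFinite _
  have hG'edge : G'.edgeSet = G.edgeSet \ {s(v, a)} := by
    rw [hG', SimpleGraph.edgeSet_deleteEdges]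
  have hcard' : G'.edgeSet.ncard ≤ N := by
    have hlt : G'.edgeSet.ncard < G.edgeSet.ncard := by
      rw [hG'edge]
      exact Set.ncard_diff_singleton_lt_of_mem (G.mem_edgeSet.2 hva) hfin
    omega
  have hdeg' : ∀ w x y z, G'.Adj w x → G'.Adj w y → G'.Adj w z → x = y ∨ x = z ∨ y = z :=
    fun w x y z h1 h2 h3 => hdeg w x y z ((hG'adj _ _).1 h1).1 ((hG'adj _ _).1 h2).1
      ((hG'adj _ _).1 h3).1
  obtain ⟨c', hc'⟩ := ih G' hcard' hdeg'
  have hav : a ≠ v := hva.ne'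
  -- the colors of the unique (if any) other incidences at `a`
  obtain ⟨x, y, hxy⟩ : ∃ x y : Fin 4, ∀ w, G.Adj a w → w ≠ v → c' a w = x ∧ c' w a = y := by
    by_cases hb : ∃ b, G.Adj a b ∧ b ≠ v
    · obtain ⟨b, hab, hbv⟩ := hb
      refine ⟨c' a b, c' b a, fun w hw hwv => ?_⟩
      have hwb : w = b := by
        rcases hdeg a w b v hw hab hva.symm with h | h | h
        · exact h
        · exact absurd h hwv
        · exact absurd h hbv
      subst hwb
      have h1 : G'.Adj a w := by
        rw [hG'adj]
        exact ⟨hw, fun h => hav h.1, fun h => hwv h.2⟩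
      exact ⟨rfl, rfl⟩
    · push_neg at hb
      exact ⟨0, 0, fun w hw hwv => absurd (hb w hw) (by simpa using hwv)⟩
  obtain ⟨α, hαx, -, -⟩ := fin4_avoid x x x
  obtain ⟨β, hβx, hβy, hβα⟩ := fin4_avoid x y α
  refine ⟨fun p q => if p = v ∧ q = a then α else if p = a ∧ q = v then β else c' p q, ?_⟩
  set c : V → V → Fin 4 :=
    fun p q => if p = v ∧ q = a then α else if p = a ∧ q = v then β else c' p q with hc
  have hcva : c v a = α := by simp [hc]
  have hcav : c a v = β := by simp [hc, hav, hav.symm]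
  have hcoth : ∀ p q, ¬(p = v ∧ q = a) → ¬(p = a ∧ q = v) → c p q = c' p q := by
    intro p q h1 h2; simp [hc, h1, h2]
  -- other incidences at `a` keep their old colors
  have hcx : ∀ w, G.Adj a w → w ≠ v → c a w = x ∧ c w a = y := by
    intro w hw hwv
    rw [hcoth a w (fun h => hav h.1) (fun h => hwv h.2),
      hcoth w a (fun h => hwv h.1) (fun h => hw.ne' h.1)]
    · exact hxy w hw hwv
  have keyA : ∀ p2 q2, G.Adj p2 q2 → (v, a) ≠ (p2, q2) → (v = p2 ∨ a = p2 ∨ v = q2) →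
      c v a ≠ c p2 q2 := by
    intro p2 q2 h2 hne hsh
    rw [hcva]
    rcases hsh with h | h | h
    · subst h
      exact absurd (by rw [huniqv q2 h2]) hne
    · subst h
      by_cases hq2 : q2 = v
      · subst hq2; rw [hcav]; exact fun h => hβα h.symm
      · rw [(hcx q2 h2 hq2).1]; exact hαx
    · subst h
      have hp2 : p2 = a := huniqv p2 h2.symm
      subst hp2
      rw [hcav]; exact fun h => hβα h.symm
  have keyB : ∀ p2 q2, G.Adj p2 q2 → (a, v) ≠ (p2, q2) → (a = p2 ∨ v = p2 ∨ a = q2) →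
      c a v ≠ c p2 q2 := by
    intro p2 q2 h2 hne hsh
    rw [hcav]
    rcases hsh with h | h | h
    · subst h
      by_cases hq2 : q2 = v
      · subst hq2; exact absurd rfl hne
      · rw [(hcx q2 h2 hq2).1]; exact hβx
    · subst h
      have hq2 : q2 = a := huniqv q2 h2
      subst hq2
      rw [hcva]; exact hβα
    · subst h
      by_cases hp2 : p2 = v
      · subst hp2; rw [hcva]; exact hβα
      · rw [(hcx p2 h2.symm hp2).2]; exact hβy
  intro p1 q1 p2 q2 h1 h2 hne hsh
  have symsh : p2 = p1 ∨ q2 = p1 ∨ p2 = q1 := by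
    rcases hsh with h | h | h
    · exact Or.inl h.symm
    · exact Or.inr (Or.inr h.symm)
    · exact Or.inr (Or.inl h.symm)
  by_cases e1 : p1 = v ∧ q1 = a
  · rw [e1.1, e1.2] at hne hsh ⊢
    exact keyA p2 q2 h2 hne hsh
  by_cases e1' : p1 = a ∧ q1 = v
  · rw [e1'.1, e1'.2] at hne hsh ⊢
    exact keyB p2 q2 h2 hne hsh
  by_cases e2 : p2 = v ∧ q2 = a
  · rw [e2.1, e2.2] at hne symsh ⊢
    exact (keyA p1 q1 h1 (Ne.symm hne) symsh).symm
  by_cases e2' : p2 = a ∧ q2 = v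
  · rw [e2'.1, e2'.2] at hne symsh ⊢
    exact (keyB p1 q1 h1 (Ne.symm hne) symsh).symm
  · push_neg at e1 e1' e2 e2'
    rw [hcoth p1 q1 (fun h => e1 h.1 h.2) (fun h => e1' h.1 h.2),
      hcoth p2 q2 (fun h => e2 h.1 h.2) (fun h => e2' h.1 h.2)]
    have hA1 : G'.Adj p1 q1 := (hG'adj _ _).2 ⟨h1, fun h => e1 h.1 h.2, fun h => e1' h.1 h.2⟩
    have hA2 : G'.Adj p2 q2 := (hG'adj _ _).2 ⟨h2, fun h => e2 h.1 h.2, fun h => e2' h.1 h.2⟩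
    exact hc' p1 q1 p2 q2 hA1 hA2 hne hsh

private lemma cycleCase {V : Type*} [Fintype V]
    (N : ℕ)
    (ih : ∀ (G : SimpleGraph V), G.edgeSet.ncard ≤ N →
      (∀ v a b c, G.Adj v a → G.Adj v b → G.Adj v c → a = b ∨ a = c ∨ b = c) →
      ∃ c, Proper G c)
    (G : SimpleGraph V) (hcard : G.edgeSet.ncard ≤ N + 1)
    (hdeg : ∀ v a b c, G.Adj v a → G.Adj v b → G.Adj v c → a = b ∨ a = c ∨ b = c)
    (h2 : ∀ v a, G.Adj v a → ∃ b, G.Adj v b ∧ b ≠ a)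
    (v0 v1 : V) (hv01 : G.Adj v0 v1) :
    ∃ c, Proper G c := by
  classical
  -- the next-vertex function
  obtain ⟨nxt, hnxt⟩ : ∃ f : V → V → V, ∀ p q, G.Adj p q → (G.Adj q (f p q) ∧ f p q ≠ p) := by
    refine ⟨fun p q => if h : ∃ b, G.Adj q b ∧ b ≠ p then h.choose else q, fun p q hpq => ?_⟩
    have h : ∃ b, G.Adj q b ∧ b ≠ p := h2 q p hpq.symm
    simp only [dif_pos h]
    exact h.choose_spec
  -- the walk
  obtain ⟨du, hdu0, hduS⟩ : ∃ du : ℕ → V × V, du 0 = (v0, v1) ∧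
      ∀ k, du (k+1) = ((du k).2, nxt (du k).1 (du k).2) :=
    ⟨fun k => Nat.rec (v0, v1) (fun _ p => (p.2, nxt p.1 p.2)) k, rfl, fun k => rfl⟩
  set u : ℕ → V := fun k => (du k).1 with hu
  have hu0 : u 0 = v0 := by show (du 0).1 = v0; rw [hdu0]
  have huS : ∀ k, u (k+1) = (du k).2 := by intro k; show (du (k+1)).1 = (du k).2; rw [hduS]
  have hu1 : u 1 = v1 := by rw [huS 0, hdu0]
  have huSS : ∀ k, u (k+2) = nxt (u k) (u (k+1)) := by
    intro k
    rw [huS (k+1), hduS k]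
    rw [huS k]
  have hadj : ∀ k, G.Adj (u k) (u (k+1)) := by
    intro k
    induction k with
    | zero => rw [hu0, hu1]; exact hv01
    | succ k ihk => rw [huSS k]; exact (hnxt _ _ ihk).1
  have hnb : ∀ k, u (k+2) ≠ u k := fun k => by rw [huSS]; exact (hnxt _ _ (hadj k)).2
  have huniq : ∀ k b, G.Adj (u (k+1)) b → b = u k ∨ b = u (k+2) := by
    intro k b hb
    rcases hdeg (u (k+1)) b (u k) (u (k+2)) hb (hadj k).symm (hadj (k+1)) with h | h | h
    · exact Or.inl h
    · exact Or.inr h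
    · exact absurd h.symm (hnb k)
  have hback : ∀ i j, u (i+1) = u (j+1) → u (i+2) = u (j+2) → u i = u j := by
    intro i j e1 e2
    have : G.Adj (u (j+1)) (u i) := e1 ▸ (hadj i).symm
    rcases huniq j (u i) this with h | h
    · exact h
    · exact absurd (h.trans e2.symm) (hnb i).symm
  have hfwd : ∀ i j, u i = u j → u (i+1) = u (j+1) → u (i+2) = u (j+2) := by
    intro i j e1 e2; rw [huSS, huSS, e1, e2]
  have hshift : ∀ m i j, u (i+m) = u (j+m) → u (i+m+1) = u (j+m+1) →
      u i = u j ∧ u (i+1) = u (j+1) := by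
    intro m
    induction m with
    | zero => intro i j e1 e2; exact ⟨e1, e2⟩
    | succ m ihm => intro i j e1 e2; exact ihm i j (hback (i+m) (j+m) e1 e2) e1
  -- a repetition exists
  have hP : ∃ t, 0 < t ∧ u t = u 0 ∧ u (t+1) = u 1 := by
    obtain ⟨i, j, hij, hd⟩ := Finite.exists_ne_map_eq_of_infinite (fun k => (u k, u (k+1)))
    rcases Prod.mk.injEq .. ▸ hd with ⟨ha, hb⟩
    rcases hij.lt_or_gt with h | h
    · refine ⟨j - i, by omega, ?_⟩
      have := hshift i 0 (j-i) (by rw [Nat.zero_add, show j - i + i = j by omega]; exact ha)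
        (by rw [Nat.zero_add, show j - i + i + 1 = j + 1 by omega]; exact hb)
      exact ⟨this.1.symm, this.2.symm⟩
    · refine ⟨i - j, by omega, ?_⟩
      have := hshift j 0 (i-j) (by rw [Nat.zero_add, show i - j + j = i by omega]; exact ha.symm)
        (by rw [Nat.zero_add, show i - j + j + 1 = i + 1 by omega]; exact hb.symm)
      exact ⟨this.1.symm, this.2.symm⟩
  set n := Nat.find hP with hn
  obtain ⟨hnpos, hun0, hun1⟩ := Nat.find_spec hP
  rw [← hn] at hnpos hun0 hun1
  have hmin : ∀ t, 0 < t → t < n → ¬(u t = u 0 ∧ u (t+1) = u 1) := by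
    intro t ht htn hc
    exact Nat.find_min hP htn ⟨ht, hc⟩
  have hn3 : 3 ≤ n := by
    rcases Nat.lt_or_ge n 3 with h | h
    · interval_cases n
      · exact absurd hun0 (hadj 0).ne'
      · exact absurd hun0 (hnb 0)
    · exact h
  -- periodicity
  have hperP : ∀ k, u (k+n) = u k ∧ u (k+n+1) = u (k+1) := by
    intro k
    induction k with
    | zero =>
      constructor
      · simpa using hun0
      · simpa [hu1] using hun1
    | succ k ihk =>
      constructor
      · rw [show k+1+n = k+n+1 by omega]; exact ihk.2
      · rw [show k+1+n+1 = k+n+2 by omega]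
        exact hfwd (k+n) k ihk.1 ihk.2
  have hper : ∀ k, u (k+n) = u k := fun k => (hperP k).1
  have hmodu : ∀ k, u k = u (k % n) := by
    have haux : ∀ q r, u (r + q * n) = u r := by
      intro q
      induction q with
      | zero => intro r; simp
      | succ q ihq =>
        intro r
        rw [show r + (q+1)*n = (r + q*n) + n by ring, hper, ihq]
    intro k
    conv_lhs => rw [← Nat.mod_add_div k n, Nat.mul_comm]
    exact haux (k / n) (k % n)
  have hcong : ∀ a b, a % n = b % n → u a = u b := by
    intro a b h; rw [hmodu a, hmodu b, h]
  -- injectivity on a period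
  have hgap : ∀ g, 0 < g → ∀ a, a + g < n → u a ≠ u (a + g) := by
    intro g
    induction g using Nat.strong_induction_on with
    | _ g IH =>
      intro hg a hag heq
      have hshift0 : ∀ s, u s = u (s + g) → u (s+1) = u (s+g+1) → False := by
        intro s e1 e2
        have := hshift s 0 g (by rw [Nat.zero_add, show g + s = s + g by omega]; exact e1)
          (by rw [Nat.zero_add, show g + s + 1 = s + g + 1 by omega]; exact e2)
        exact hmin g hg (by omega) ⟨this.1.symm, this.2.symm⟩
      rcases Nat.lt_or_ge g 3 with hg3 | hg3
      · interval_cases g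
        · exact (hadj a).ne heq
        · exact hnb a heq.symm
      · set b := a + g with hb
        have hp12 : u (a+1) ≠ u (b+1) := fun h => hshift0 a heq h
        have hq12 : u (a+n-1) ≠ u (b+n-1) := by
          intro h
          have e2 : u (a+n-1+1) = u (b+n-1+1) := by
            rw [show a+n-1+1 = a+n by omega, show b+n-1+1 = b+n by omega, hper a, hper b, heq]
          have := hshift (a+n-1) 0 g
            (by rw [Nat.zero_add, show g + (a+n-1) = b+n-1 by omega]; exact h)
            (by rw [Nat.zero_add, show g + (a+n-1) + 1 = b+n-1+1 by omega]; exact e2)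
          exact hmin g hg (by omega) ⟨this.1.symm, this.2.symm⟩
        have hadjx1 : G.Adj (u a) (u (a+1)) := hadj a
        have hadjx2 : G.Adj (u a) (u (b+1)) := heq ▸ hadj b
        have hinadj : ∀ s, G.Adj (u s) (u (s+n-1)) := by
          intro s
          have h := hadj (s+n-1)
          rw [show s+n-1+1 = s+n by omega, hper s] at h
          exact h.symm
        have hadjx3 : G.Adj (u a) (u (a+n-1)) := hinadj a
        have hadjx4 : G.Adj (u a) (u (b+n-1)) := heq ▸ hinadj b
        have hinne : ∀ s, u (s+1) ≠ u (s+n-1) := by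
          intro s
          have h := hnb (s+n-1)
          rw [show s+n-1+2 = (s+1)+n by omega, hper (s+1)] at h
          exact h
        have h1 : u (b+1) = u (a+n-1) := by
          rcases hdeg (u a) (u (a+1)) (u (b+1)) (u (a+n-1)) hadjx1 hadjx2 hadjx3 with h | h | h
          · exact absurd h hp12
          · exact absurd h (hinne a)
          · exact h
        have h2' : u (a+1) = u (b+n-1) := by
          rcases hdeg (u a) (u (a+1)) (u (b+1)) (u (b+n-1)) hadjx1 hadjx2 hadjx4 with h | h | h
          · exact absurd h hp12
          · exact h
          · exact absurd h (hinne b)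
        have hred : u (a+1) = u (b-1) := by
          rw [h2', show b+n-1 = (b-1)+n by omega, hper]
        exact IH (g-2) (by omega) (by omega) (a+1)
          (by omega) (by rwa [show a+1+(g-2) = b-1 by omega])
  have hinj : ∀ a b, a < n → b < n → u a = u b → a = b := by
    intro a b ha hb heq
    rcases Nat.lt_trichotomy a b with h | h | h
    · exact absurd (by rwa [show a + (b-a) = b by omega]) (hgap (b-a) (by omega) a (by omega))
    · exact h
    · exact absurd (by rw [show b + (a-b) = a by omega]; exact heq.symm) (hgap (a-b) (by omega) b (by omega))
  have hinjmod : ∀ a b, u a = u b → a % n = b % n := by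
    intro a b h
    exact hinj (a % n) (b % n) (Nat.mod_lt _ (by omega)) (Nat.mod_lt _ (by omega))
      (by rw [← hmodu a, ← hmodu b]; exact h)
  have haddc : ∀ a b m, u a = u b → u (a+m) = u (b+m) := by
    intro a b m h
    apply hcong
    have := hinjmod a b h
    rw [Nat.add_mod a m n, Nat.add_mod b m n, this]
  have hnbr : ∀ k x, G.Adj (u k) x → x = u (k+1) ∨ x = u (k+n-1) := by
    intro k x hx
    have hinadj : G.Adj (u k) (u (k+n-1)) := by
      have h := hadj (k+n-1)
      rw [show k+n-1+1 = k+n by omega, hper k] at h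
      exact h.symm
    have hinne : u (k+1) ≠ u (k+n-1) := by
      have h := hnb (k+n-1)
      rw [show k+n-1+2 = (k+1)+n by omega, hper (k+1)] at h
      exact h
    rcases hdeg (u k) x (u (k+1)) (u (k+n-1)) hx (hadj k) hinadj with h | h | h
    · exact Or.inl h
    · exact Or.inr h
    · exact absurd h hinne
  -- the colors
  have hnn : 0 < n := by omega
  set Fcol : ℕ → Fin 4 := fun i => ⟨Fc n (i % n), Fc_lt n _⟩ with hFcolD
  set Bcol : ℕ → Fin 4 := fun i => ⟨Bc n (i % n), Bc_lt n _⟩ with hBcolD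
  have hFcolu : ∀ a b, u a = u b → Fcol a = Fcol b := by
    intro a b h; simp only [hFcolD]; rw [hinjmod a b h]
  have hBcolu : ∀ a b, u a = u b → Bcol a = Bcol b := by
    intro a b h; simp only [hBcolD]; rw [hinjmod a b h]
  have hseq : ∀ i, Fcol i ≠ Bcol i ∧ Fcol (i+1) ≠ Fcol i ∧ Bcol (i+1) ≠ Bcol i ∧
      Fcol (i+1) ≠ Bcol i := by
    intro i
    have h := seq_constraints n hn3 (i % n) (Nat.mod_lt _ hnn)
    have e : (i+1) % n = (i % n + 1) % n := by
      rw [Nat.add_mod i 1 n, Nat.mod_eq_of_lt (show 1 < n by omega)]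
    refine ⟨?_, ?_, ?_, ?_⟩ <;> simp only [hFcolD, hBcolD, e, Ne, Fin.mk.injEq]
    · exact h.1
    · exact h.2.1
    · exact h.2.2.1
    · exact h.2.2.2
  -- delete the cycle
  set CE : Set (Sym2 V) := {e | ∃ i, e = s(u i, u (i+1))} with hCE
  set G' : SimpleGraph V := G.deleteEdges CE with hG'
  have hG'adj : ∀ x y, G'.Adj x y ↔ G.Adj x y ∧ ¬∃ i, s(x,y) = s(u i, u (i+1)) := by
    intro x y
    rw [hG', SimpleGraph.deleteEdges_adj]
    simp only [hCE, Set.mem_setOf_eq]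
  have hcard' : G'.edgeSet.ncard ≤ N := by
    have hss : G'.edgeSet ⊂ G.edgeSet := by
      rw [hG', SimpleGraph.edgeSet_deleteEdges]
      constructor
      · exact Set.diff_subset
      · intro hsub
        have h1 : s(u 0, u 1) ∈ G.edgeSet := G.mem_edgeSet.2 (hadj 0)
        have h2 := hsub h1
        rw [Set.mem_diff] at h2
        exact h2.2 ⟨0, rfl⟩
    have := Set.ncard_lt_ncard hss (Set.toFinite _)
    omega
  have hdeg' : ∀ v a b c, G'.Adj v a → G'.Adj v b → G'.Adj v c → a = b ∨ a = c ∨ b = c := by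
    intro v a b c ha hb hc
    exact hdeg v a b c ((hG'adj _ _).1 ha).1 ((hG'adj _ _).1 hb).1 ((hG'adj _ _).1 hc).1
  obtain ⟨c', hc'⟩ := ih G' hcard' hdeg'
  -- the new coloring
  obtain ⟨c, hcF, hcB, hcO⟩ : ∃ c : V → V → Fin 4,
      (∀ k, c (u k) (u (k+1)) = Fcol k) ∧ (∀ k, c (u (k+1)) (u k) = Bcol k) ∧
      (∀ x y, (¬∃ i, x = u i) → c x y = c' x y) := by
    refine ⟨fun x y =>
      if h : ∃ m, m < n ∧ x = u m ∧ y = u (m+1) then Fcol h.choose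
      else if h' : ∃ m, m < n ∧ x = u (m+1) ∧ y = u m then Bcol h'.choose
      else c' x y, fun k => ?_, fun k => ?_, fun x y hx => ?_⟩
    · have hex : ∃ m, m < n ∧ u k = u m ∧ u (k+1) = u (m+1) :=
        ⟨k % n, Nat.mod_lt _ hnn, hmodu k, haddc k (k % n) 1 (hmodu k)⟩
      beta_reduce
      rw [dif_pos hex]
      obtain ⟨hm, hum, hum1⟩ := hex.choose_spec
      exact hFcolu _ _ hum.symm
    · have hno : ¬∃ m, m < n ∧ u (k+1) = u m ∧ u k = u (m+1) := by
        rintro ⟨m, hm, e1, e2⟩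
        exact hnb k ((haddc (k+1) m 1 e1).trans e2.symm)
      have hex : ∃ m, m < n ∧ u (k+1) = u (m+1) ∧ u k = u m :=
        ⟨k % n, Nat.mod_lt _ hnn, haddc k (k % n) 1 (hmodu k), hmodu k⟩
      beta_reduce
      rw [dif_neg hno, dif_pos hex]
      obtain ⟨hm, hum1, hum⟩ := hex.choose_spec
      exact hBcolu _ _ hum.symm
    · beta_reduce
      rw [dif_neg (fun ⟨m, _, e, _⟩ => hx ⟨m, e⟩),
        dif_neg (fun ⟨m, _, e, _⟩ => hx ⟨m+1, e⟩)]
  -- classification of incidences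
  have hclass : ∀ x y, G.Adj x y → (∃ k, x = u k ∧ y = u (k+1)) ∨
      (∃ k, x = u (k+1) ∧ y = u k) ∨ ((¬∃ i, x = u i) ∧ (¬∃ i, y = u i)) := by
    intro x y hxy
    by_cases hx : ∃ i, x = u i
    · obtain ⟨i, rfl⟩ := hx
      rcases hnbr i y hxy with h | h
      · exact Or.inl ⟨i, rfl, h⟩
      · refine Or.inr (Or.inl ⟨i+n-1, ?_, h⟩)
        rw [show i+n-1+1 = i+n by omega, hper]
    · by_cases hy : ∃ i, y = u i
      · obtain ⟨j, rfl⟩ := hy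
        rcases hnbr j x hxy.symm with h | h
        · exact Or.inr (Or.inl ⟨j, h, rfl⟩)
        · refine Or.inl ⟨j+n-1, h, ?_⟩
          rw [show j+n-1+1 = j+n by omega, hper]
      · exact Or.inr (Or.inr ⟨hx, hy⟩)
  have hG'of : ∀ x y, G.Adj x y → (¬∃ i, x = u i) → G'.Adj x y := by
    intro x y hxy hx
    rw [hG'adj]
    refine ⟨hxy, ?_⟩
    rintro ⟨i, he⟩
    rw [Sym2.eq_iff] at he
    rcases he with ⟨e1, -⟩ | ⟨e1, -⟩
    · exact hx ⟨i, e1⟩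
    · exact hx ⟨i+1, e1⟩
  refine ⟨c, ?_⟩
  intro p1 q1 p2 q2 h1 h2 hne hsh
  rcases hclass p1 q1 h1 with ⟨i, rfl, rfl⟩ | ⟨i, rfl, rfl⟩ | ⟨hx1, hy1⟩
  · rcases hclass p2 q2 h2 with ⟨j, rfl, rfl⟩ | ⟨j, rfl, rfl⟩ | ⟨hx2, hy2⟩
    · -- F vs F
      rw [hcF i, hcF j]
      rcases hsh with h | h | h
      · exact absurd (by rw [h, haddc i j 1 h]) hne
      · rw [← hFcolu (i+1) j h]
        exact ((hseq i).2.1).symm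
      · rw [hFcolu i (j+1) h]
        exact (hseq j).2.1
    · -- F vs B
      rw [hcF i, hcB j]
      rcases hsh with h | h | h
      · rw [hFcolu i (j+1) h]
        exact (hseq j).2.2.2
      · rw [hFcolu i j (hback i j h (haddc (i+1) (j+1) 1 h))]
        exact (hseq j).1
      · rw [hFcolu i j h]
        exact (hseq j).1
    · -- F vs O
      rcases hsh with h | h | h
      · exact absurd ⟨i, h.symm⟩ hx2
      · exact absurd ⟨i+1, h.symm⟩ hx2
      · exact absurd ⟨i, h.symm⟩ hy2
  · rcases hclass p2 q2 h2 with ⟨j, rfl, rfl⟩ | ⟨j, rfl, rfl⟩ | ⟨hx2, hy2⟩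
    · -- B vs F
      rw [hcB i, hcF j]
      rcases hsh with h | h | h
      · rw [← hFcolu (i+1) j h]
        exact ((hseq i).2.2.2).symm
      · rw [← hFcolu i j h]
        exact ((hseq i).1).symm
      · rw [← hFcolu i j (hback i j h (haddc (i+1) (j+1) 1 h))]
        exact ((hseq i).1).symm
    · -- B vs B
      rw [hcB i, hcB j]
      rcases hsh with h | h | h
      · exact absurd (by rw [h, hback i j h (haddc (i+1) (j+1) 1 h)]) hne
      · rw [hBcolu i (j+1) h]
        exact (hseq j).2.2.1
      · rw [← hBcolu (i+1) j h]
        exact ((hseq i).2.2.1).symm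
    · -- B vs O
      rcases hsh with h | h | h
      · exact absurd ⟨i+1, h.symm⟩ hx2
      · exact absurd ⟨i, h.symm⟩ hx2
      · exact absurd ⟨i+1, h.symm⟩ hy2
  · rcases hclass p2 q2 h2 with ⟨j, rfl, rfl⟩ | ⟨j, rfl, rfl⟩ | ⟨hx2, hy2⟩
    · -- O vs F
      rcases hsh with h | h | h
      · exact absurd ⟨j, h⟩ hx1
      · exact absurd ⟨j, h⟩ hy1
      · exact absurd ⟨j+1, h⟩ hx1
    · -- O vs B
      rcases hsh with h | h | h
      · exact absurd ⟨j+1, h⟩ hx1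
      · exact absurd ⟨j+1, h⟩ hy1
      · exact absurd ⟨j, h⟩ hx1
    · -- O vs O
      rw [hcO p1 q1 hx1, hcO p2 q2 hx2]
      exact hc' p1 q1 p2 q2 (hG'of _ _ h1 hx1) (hG'of _ _ h2 hx2) hne hsh


private lemma core {V : Type*} [Fintype V] :
    ∀ (N : ℕ) (G : SimpleGraph V), G.edgeSet.ncard ≤ N →
      (∀ v a b c, G.Adj v a → G.Adj v b → G.Adj v c → a = b ∨ a = c ∨ b = c) →
      ∃ c, Proper G c := by
  classical
  intro N
  induction N with
  | zero =>
    intro G hcard _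
    refine ⟨fun _ _ => 0, fun v w v' w' h1 _ _ _ => ?_⟩
    exfalso
    have hfin : G.edgeSet.Finite := Set.toFinite _
    have hemp : G.edgeSet = ∅ := by
      rw [← Set.ncard_eq_zero hfin]; omega
    exact absurd (G.mem_edgeSet.2 h1) (by simp [hemp])
  | succ N ih =>
    intro G hcard hdeg
    by_cases hdeg1 : ∃ v a, G.Adj v a ∧ ∀ b, G.Adj v b → b = a
    · exact deg1Case N ih G hcard hdeg hdeg1
    by_cases hE : ∀ v w, ¬ G.Adj v w
    · exact ⟨fun _ _ => 0, fun v w v' w' h1 _ _ _ => absurd h1 (hE v w)⟩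
    push_neg at hE hdeg1
    obtain ⟨v0, v1, hv01⟩ := hE
    refine cycleCase N ih G hcard hdeg ?_ v0 v1 hv01
    intro v a hva
    obtain ⟨b, hb1, hb2⟩ := hdeg1 v a hva
    exact ⟨b, hb1, hb2⟩

private lemma incoming_le {V : Type*} [Fintype V] (G : SimpleGraph V) [DecidableRel G.Adj]
    (hΔ : G.maxDegree ≤ 2) (k : ℕ) (c : V → V → Fin k) (v : V) :
    {x : Fin k | ∃ u, G.Adj u v ∧ c u v = x}.ncard ≤ 2 := by
  classical
  have heq : {x : Fin k | ∃ u, G.Adj u v ∧ c u v = x} =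
      (fun u => c u v) '' ↑(G.neighborFinset v) := by
    ext x
    simp only [Set.mem_setOf_eq, Set.mem_image, Finset.coe_sort_coe, Finset.mem_coe,
      SimpleGraph.mem_neighborFinset]
    constructor
    · rintro ⟨u, hu, hx⟩; exact ⟨u, hu.symm, hx⟩
    · rintro ⟨u, hu, hx⟩; exact ⟨u, hu.symm, hx⟩
  rw [heq]
  have h1 := Set.ncard_image_le (s := (↑(G.neighborFinset v) : Set V))
    (f := fun u => c u v) (Set.toFinite _)
  have h2 : (↑(G.neighborFinset v) : Set V).ncard = G.degree v := by
    rw [Set.ncard_coe_finset]; rfl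
  have h3 := G.degree_le_maxDegree v
  omega

/-- Every simple graph with maximum degree Δ ≤ 2 admits a (Δ+2, 2)-incidence coloring. -/
theorem stmt_2 {V : Type*} [Fintype V] (G : SimpleGraph V) [DecidableRel G.Adj]
    (hΔ : G.maxDegree ≤ 2) : HasIncColoring G (G.maxDegree + 2) 2 := by
  classical
  rcases (show G.maxDegree = 0 ∨ G.maxDegree = 1 ∨ G.maxDegree = 2 by omega) with h | h | h
  · -- no edges
    have hnoadj : ∀ v w, ¬ G.Adj v w := by
      intro v w hvw
      have : 0 < G.degree v := Finset.card_pos.2 ⟨w, (G.mem_neighborFinset v w).2 hvw⟩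
      have := G.degree_le_maxDegree v
      omega
    exact ⟨fun _ _ => 0, fun v w _ _ h1 _ _ _ => absurd h1 (hnoadj v w),
      incoming_le G hΔ _ _⟩
  · -- a matching
    have huniq : ∀ v a b, G.Adj v a → G.Adj v b → a = b := by
      intro v a b ha hb
      have hd : G.degree v ≤ 1 := h ▸ G.degree_le_maxDegree v
      exact Finset.card_le_one.1 hd a ((G.mem_neighborFinset v a).2 ha)
        b ((G.mem_neighborFinset v b).2 hb)
    set e := Fintype.equivFin V with he
    refine ⟨fun v w => if e v < e w then 0 else 1, ?_, incoming_le G hΔ _ _⟩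
    have hkey : ∀ v w, G.Adj v w →
        (if e v < e w then (0 : Fin (G.maxDegree + 2)) else 1) ≠
          (if e w < e v then 0 else 1) := by
      intro v w hvw
      have hne : e v ≠ e w := fun hh => hvw.ne (e.injective hh)
      rcases hne.lt_or_gt with hlt | hlt
      · rw [if_pos hlt, if_neg (by omega)]
        simp [h, Fin.ext_iff]
      · rw [if_neg (by omega), if_pos hlt]
        simp [h, Fin.ext_iff]
    intro v w v' w' h1 h2 hne hsh
    rcases hsh with h | h | h
    · rw [← h] at h2
      exact absurd (by rw [h, huniq v w w' h1 h2]) hne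
    · rw [← h] at h2
      have hw : w' = v := huniq w w' v h2 h1.symm
      rw [← h, hw]
      exact hkey v w h1
    · rw [← h] at h2
      have hw : w = v' := huniq v w v' h1 h2.symm
      rw [← h, ← hw]
      exact hkey v w h1
  · -- max degree two
    have hdeg : ∀ v a b c, G.Adj v a → G.Adj v b → G.Adj v c → a = b ∨ a = c ∨ b = c := by
      intro v a b c ha hb hc
      by_contra hcon
      push_neg at hcon
      obtain ⟨hab, hac, hbc⟩ := hcon
      have hsub : {a, b, c} ⊆ G.neighborFinset v := by
        intro x hx
        simp only [Finset.mem_insert, Finset.mem_singleton] at hx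
        rcases hx with rfl | rfl | rfl
        · exact (G.mem_neighborFinset v x).2 ha
        · exact (G.mem_neighborFinset v x).2 hb
        · exact (G.mem_neighborFinset v x).2 hc
      have h3 : ({a, b, c} : Finset V).card = 3 := by
        rw [Finset.card_insert_of_notMem (by simp [hab, hac]),
          Finset.card_insert_of_notMem (by simp [hbc]), Finset.card_singleton]
      have := Finset.card_le_card hsub
      have hd : G.degree v ≤ 2 := h ▸ G.degree_le_maxDegree v
      have : (G.neighborFinset v).card = G.degree v := rfl
      omega
    obtain ⟨c, hc⟩ := core G.edgeSet.ncard G le_rfl hdeg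
    rw [h]
    exact ⟨c, hc, incoming_le G hΔ _ _⟩
end

section
/- Let G be a simple graph with maximum degree Δ, and let u be a vertex of degree 2 whose neighbors v and w are adjacent in G. If G − u admits a (Δ+2, 2)-incidence coloring, then so does G. -/
lemma fresh_color_aux {n : ℕ} (s : Set (Fin n)) (h : s.ncard < n) : ∃ x, x ∉ s := by
  by_contra hc
  push_neg at hc
  rw [Set.eq_univ_of_forall hc, Set.ncard_univ, Nat.card_eq_fintype_card, Fintype.card_fin] at h
  exact lt_irrefl _ h

/-- If u has degree 2 with adjacent neighbors v, w, and G - u has a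
(Δ+2,2)-incidence coloring, then so does G. -/
theorem stmt_4 {V : Type*} [Fintype V] [DecidableEq V] (G : SimpleGraph V)
    [DecidableRel G.Adj] (u v w : V) (hdeg : G.degree u = 2) (hvw : v ≠ w)
    (huv : G.Adj u v) (huw : G.Adj u w) (hadj : G.Adj v w)
    (h : HasIncColoring (G.induce {x | x ≠ u}) (G.maxDegree + 2) 2) :
    HasIncColoring G (G.maxDegree + 2) 2 := by
  obtain ⟨c', hc'p, hc'l⟩ := h
  have hvu : v ≠ u := huv.ne'
  have hwu : w ≠ u := huw.ne'
  have hfst : ∀ {s t s' t' : ↥{x : V | x ≠ u}}, (s, t) = (s', t') → (s : V) = s' := by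
    intro s t s' t' hh
    exact congrArg Subtype.val (congrArg Prod.fst hh)
  have hsnd : ∀ {s t s' t' : ↥{x : V | x ≠ u}}, (s, t) = (s', t') → (t : V) = t' := by
    intro s t s' t' hh
    exact congrArg Subtype.val (congrArg Prod.snd hh)
  have hmk : ∀ (x : V) (hx : x ≠ u) (y : V) (hy : y ≠ u), x = y →
      (⟨x, hx⟩ : ↥{x : V | x ≠ u}) = ⟨y, hy⟩ := fun _ _ _ _ hh => Subtype.ext hh
  -- neighbors of u are exactly v and w
  have hnb : ∀ x, G.Adj u x → x = v ∨ x = w := by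
    intro x hx
    have hsub : ({v, w} : Finset V) ⊆ G.neighborFinset u := by
      intro y hy
      rcases Finset.mem_insert.mp hy with rfl | hy
      · exact (G.mem_neighborFinset u y).mpr huv
      · rw [Finset.mem_singleton] at hy
        subst hy
        exact (G.mem_neighborFinset u y).mpr huw
    have hcard : (G.neighborFinset u).card ≤ ({v, w} : Finset V).card := by
      rw [Finset.card_pair hvw, G.card_neighborFinset_eq_degree, hdeg]
    have heq := Finset.eq_of_subset_of_card_le hsub hcard
    have hx' : x ∈ G.neighborFinset u := (G.mem_neighborFinset u x).mpr hx
    rw [← heq] at hx'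
    simpa using hx'
  -- fresh colors for the incidences (v, vu) and (w, wu)
  have hfresh : ∀ (z : V) (hz : z ≠ u), G.Adj u z →
      ∃ col : Fin (G.maxDegree + 2),
        (∀ y, (G.induce {x | x ≠ u}).Adj ⟨z, hz⟩ y → col ≠ c' ⟨z, hz⟩ y) ∧
        (∀ y, (G.induce {x | x ≠ u}).Adj y ⟨z, hz⟩ → col ≠ c' y ⟨z, hz⟩) := by
    intro z hz huz
    set Out : Set (Fin (G.maxDegree + 2)) :=
      {col | ∃ y, (G.induce {x | x ≠ u}).Adj ⟨z, hz⟩ y ∧ c' ⟨z, hz⟩ y = col} with hOutdef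
    set In : Set (Fin (G.maxDegree + 2)) :=
      {col | ∃ y, (G.induce {x | x ≠ u}).Adj y ⟨z, hz⟩ ∧ c' y ⟨z, hz⟩ = col} with hIndef
    have hIn : In.ncard ≤ 2 := hc'l ⟨z, hz⟩
    have hOut : Out.ncard + 1 ≤ G.maxDegree := by
      have h1 : Out ⊆ (fun y => c' ⟨z, hz⟩ y) '' {y | (G.induce {x | x ≠ u}).Adj ⟨z, hz⟩ y} := by
        rintro col ⟨y, hy, he⟩
        exact ⟨y, hy, he⟩
      have h2 : Out.ncard ≤ {y | (G.induce {x | x ≠ u}).Adj ⟨z, hz⟩ y}.ncard :=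
        le_trans (Set.ncard_le_ncard h1 (Set.toFinite _)) (Set.ncard_image_le (Set.toFinite _))
      have h3 : {y | (G.induce {x | x ≠ u}).Adj ⟨z, hz⟩ y}.ncard
          = (Subtype.val '' {y | (G.induce {x | x ≠ u}).Adj ⟨z, hz⟩ y}).ncard :=
        (Set.ncard_image_of_injective _ Subtype.val_injective).symm
      have h4 : Subtype.val '' {y : ↥{x : V | x ≠ u} | (G.induce {x | x ≠ u}).Adj ⟨z, hz⟩ y}
          ⊆ G.neighborSet z \ {u} := by
        rintro y ⟨y', hy', rfl⟩
        exact ⟨hy', y'.2⟩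
      have h5 : (G.neighborSet z \ {u}).ncard + 1 = G.degree z := by
        have hmem : u ∈ G.neighborSet z := huz.symm
        have hni : u ∉ G.neighborSet z \ {u} := fun hh => hh.2 rfl
        have hins := Set.ncard_insert_of_notMem hni (Set.toFinite _)
        rw [Set.insert_diff_singleton, Set.insert_eq_of_mem hmem] at hins
        rw [← hins, ← Nat.card_coe_set_eq, Nat.card_eq_fintype_card,
          G.card_neighborSet_eq_degree]
      have h7 := G.degree_le_maxDegree z
      have h8 : Out.ncard ≤ (G.neighborSet z \ {u}).ncard := by
        rw [h3] at h2
        exact le_trans h2 (Set.ncard_le_ncard h4 (Set.toFinite _))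
      omega
    have hcard : (Out ∪ In).ncard < G.maxDegree + 2 := by
      have := Set.ncard_union_le Out In
      omega
    obtain ⟨col, hcol⟩ := fresh_color_aux _ hcard
    refine ⟨col, fun y hy he => hcol (Or.inl ⟨y, hy, he.symm⟩),
      fun y hy he => hcol (Or.inr ⟨y, hy, he.symm⟩)⟩
  obtain ⟨cv, hcvO, hcvI⟩ := hfresh v hvu huv
  obtain ⟨cw, hcwO, hcwI⟩ := hfresh w hwu huw
  -- key adjacencies in the induced graph
  have hvw' : (G.induce {x | x ≠ u}).Adj ⟨v, hvu⟩ ⟨w, hwu⟩ := hadj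
  have hwv' : (G.induce {x | x ≠ u}).Adj ⟨w, hwu⟩ ⟨v, hvu⟩ := hadj.symm
  set a : Fin (G.maxDegree + 2) := c' ⟨v, hvu⟩ ⟨w, hwu⟩ with ha
  set b : Fin (G.maxDegree + 2) := c' ⟨w, hwu⟩ ⟨v, hvu⟩ with hb
  have hab : a ≠ b :=
    hc'p _ _ _ _ hvw' hwv' (fun hh => hvw (hfst hh)) (Or.inr (Or.inr rfl))
  have hcvb : cv ≠ b := hcvI _ hwv'
  have hcva : cv ≠ a := hcvO _ hvw'
  have hcwb : cw ≠ b := hcwO _ hwv'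
  have hcwa : cw ≠ a := hcwI _ hvw'
  -- the extended coloring
  set c : V → V → Fin (G.maxDegree + 2) := fun x y =>
    if hx : x = u then (if y = v then b else a)
    else if hy : y = u then (if x = v then cv else cw)
    else c' ⟨x, hx⟩ ⟨y, hy⟩ with hcdef
  have hcuv : c u v = b := by simp [hcdef]
  have hcuw : c u w = a := by simp [hcdef, hvw.symm]
  have hcvu : c v u = cv := by simp [hcdef, hvu]
  have hcwu : c w u = cw := by simp [hcdef, hwu, hvw.symm]
  have hcxy : ∀ (x y : V) (hx : x ≠ u) (hy : y ≠ u), c x y = c' ⟨x, hx⟩ ⟨y, hy⟩ := by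
    intro x y hx hy; simp [hcdef, hx, hy]
  refine ⟨c, ?_, ?_⟩
  · -- properness
    intro p q p' q' hpq hp'q' hne hcond
    by_cases hp : p = u
    · have hq := hnb q (by rw [← hp]; exact hpq)
      by_cases hp' : p' = u
      · -- case 1 : p = u, p' = u
        have hq' := hnb q' (by rw [← hp']; exact hp'q')
        have hqq' : q ≠ q' := fun hh => hne (by rw [hp, hp', hh])
        rcases hq with hq | hq <;> rcases hq' with hq' | hq'
        · exact absurd (hq.trans hq'.symm) hqq'
        · rw [hp, hq, hq', hp', hcuv, hcuw]; exact fun hh => hab hh.symm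
        · rw [hp, hq, hq', hp', hcuw, hcuv]; exact hab
        · exact absurd (hq.trans hq'.symm) hqq'
      · by_cases hq' : q' = u
        · -- case 2 : p = u, q' = u
          have hp'' := hnb p' (by rw [← hq']; exact hp'q'.symm)
          rcases hq with hq | hq <;> rcases hp'' with h2 | h2
          · rw [hp, hq, h2, hq', hcuv, hcvu]; exact fun hh => hcvb hh.symm
          · rw [hp, hq, h2, hq', hcuv, hcwu]; exact fun hh => hcwb hh.symm
          · rw [hp, hq, h2, hq', hcuw, hcvu]; exact fun hh => hcva hh.symm
          · rw [hp, hq, h2, hq', hcuw, hcwu]; exact fun hh => hcwa hh.symm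
        · -- case 3 : p = u, p' ≠ u, q' ≠ u ; necessarily q = p'
          have hqp' : q = p' := by
            rcases hcond with hh | hh | hh
            · exact absurd (by rw [← hh]; exact hp) hp'
            · exact hh
            · exact absurd (by rw [← hh]; exact hp) hq'
          rcases hq with hq | hq
          · have hp'v : p' = v := by rw [← hqp', hq]
            rw [hp, hq, hcuv, hcxy p' q' hp' hq', hmk p' hp' v hvu hp'v]
            exact hc'p ⟨w, hwu⟩ ⟨v, hvu⟩ ⟨v, hvu⟩ ⟨q', hq'⟩ hwv'
              (show G.Adj v q' by rw [← hp'v]; exact hp'q')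
              (fun hh => hvw.symm (hfst hh)) (Or.inr (Or.inl rfl))
          · have hp'w : p' = w := by rw [← hqp', hq]
            rw [hp, hq, hcuw, hcxy p' q' hp' hq', hmk p' hp' w hwu hp'w]
            exact hc'p ⟨v, hvu⟩ ⟨w, hwu⟩ ⟨w, hwu⟩ ⟨q', hq'⟩ hvw'
              (show G.Adj w q' by rw [← hp'w]; exact hp'q')
              (fun hh => hvw (hfst hh)) (Or.inr (Or.inl rfl))
    · by_cases hq : q = u
      · -- p ≠ u, q = u : p ∈ {v, w}
        have hpvw := hnb p (by rw [← hq]; exact hpq.symm)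
        by_cases hp' : p' = u
        · -- case 4 : q = u, p' = u
          have hq' := hnb q' (by rw [← hp']; exact hp'q')
          rcases hpvw with h1 | h1 <;> rcases hq' with h2 | h2
          · rw [h1, hq, hp', h2, hcvu, hcuv]; exact hcvb
          · rw [h1, hq, hp', h2, hcvu, hcuw]; exact hcva
          · rw [h1, hq, hp', h2, hcwu, hcuv]; exact hcwb
          · rw [h1, hq, hp', h2, hcwu, hcuw]; exact hcwa
        · by_cases hq' : q' = u
          · -- case 5 : q = u, q' = u, p ≠ u, p' ≠ u : the adjacency condition fails
            rcases hcond with hh | hh | hh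
            · exact absurd (show (p, q) = (p', q') by rw [hh, hq, hq']) hne
            · exact absurd (by rw [← hh]; exact hq) hp'
            · exact absurd (by rw [hh]; exact hq') hp
          · -- case 6 : q = u, p' ≠ u, q' ≠ u : p = p' or p = q'
            rcases hcond with hh | hh | hh
            · rcases hpvw with h1 | h1
              · have hp'v : p' = v := by rw [← hh, h1]
                rw [h1, hq, hcvu, hcxy p' q' hp' hq', hmk p' hp' v hvu hp'v]
                exact hcvO ⟨q', hq'⟩ (show G.Adj v q' by rw [← hp'v]; exact hp'q')
              · have hp'w : p' = w := by rw [← hh, h1]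
                rw [h1, hq, hcwu, hcxy p' q' hp' hq', hmk p' hp' w hwu hp'w]
                exact hcwO ⟨q', hq'⟩ (show G.Adj w q' by rw [← hp'w]; exact hp'q')
            · exact absurd (by rw [← hh]; exact hq) hp'
            · rcases hpvw with h1 | h1
              · have hq'v : q' = v := by rw [← hh, h1]
                rw [h1, hq, hcvu, hcxy p' q' hp' hq', hmk q' hq' v hvu hq'v]
                exact hcvI ⟨p', hp'⟩ (show G.Adj p' v by rw [← hq'v]; exact hp'q')
              · have hq'w : q' = w := by rw [← hh, h1]
                rw [h1, hq, hcwu, hcxy p' q' hp' hq', hmk q' hq' w hwu hq'w]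
                exact hcwI ⟨p', hp'⟩ (show G.Adj p' w by rw [← hq'w]; exact hp'q')
      · -- p ≠ u, q ≠ u
        by_cases hp' : p' = u
        · -- case 7 : p' = u : p = q' ∈ {v, w}
          have hq'' := hnb q' (by rw [← hp']; exact hp'q')
          have hpq'' : p = q' := by
            rcases hcond with hh | hh | hh
            · exact absurd (by rw [hh]; exact hp') hp
            · exact absurd (by rw [hh]; exact hp') hq
            · exact hh
          rcases hq'' with h1 | h1
          · have hpv : p = v := by rw [hpq'', h1]
            rw [hcxy p q hp hq, hp', h1, hcuv, hmk p hp v hvu hpv]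
            exact hc'p ⟨v, hvu⟩ ⟨q, hq⟩ ⟨w, hwu⟩ ⟨v, hvu⟩
              (show G.Adj v q by rw [← hpv]; exact hpq) hwv'
              (fun hh => hvw (hfst hh)) (Or.inr (Or.inr rfl))
          · have hpw : p = w := by rw [hpq'', h1]
            rw [hcxy p q hp hq, hp', h1, hcuw, hmk p hp w hwu hpw]
            exact hc'p ⟨w, hwu⟩ ⟨q, hq⟩ ⟨v, hvu⟩ ⟨w, hwu⟩
              (show G.Adj w q by rw [← hpw]; exact hpq) hvw'
              (fun hh => hvw.symm (hfst hh)) (Or.inr (Or.inr rfl))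
        · by_cases hq' : q' = u
          · -- case 8 : q' = u, p' ∈ {v, w}
            have hp'' := hnb p' (by rw [← hq']; exact hp'q'.symm)
            rcases hp'' with h1 | h1
            · rw [hcxy p q hp hq, hq', h1, hcvu]
              rcases hcond with hh | hh | hh
              · have hpv : p = v := by rw [hh, h1]
                rw [hmk p hp v hvu hpv]
                exact fun h2 =>
                  hcvO ⟨q, hq⟩ (show G.Adj v q by rw [← hpv]; exact hpq) h2.symm
              · have hqv : q = v := by rw [hh, h1]
                rw [hmk q hq v hvu hqv]
                exact fun h2 =>
                  hcvI ⟨p, hp⟩ (show G.Adj p v by rw [← hqv]; exact hpq) h2.symm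
              · exact absurd (by rw [hh]; exact hq') hp
            · rw [hcxy p q hp hq, hq', h1, hcwu]
              rcases hcond with hh | hh | hh
              · have hpw : p = w := by rw [hh, h1]
                rw [hmk p hp w hwu hpw]
                exact fun h2 =>
                  hcwO ⟨q, hq⟩ (show G.Adj w q by rw [← hpw]; exact hpq) h2.symm
              · have hqw : q = w := by rw [hh, h1]
                rw [hmk q hq w hwu hqw]
                exact fun h2 =>
                  hcwI ⟨p, hp⟩ (show G.Adj p w by rw [← hqw]; exact hpq) h2.symm
              · exact absurd (by rw [hh]; exact hq') hp
          · -- case 9 : no vertex is u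
            rw [hcxy p q hp hq, hcxy p' q' hp' hq']
            refine hc'p _ _ _ _ hpq hp'q' ?_ ?_
            · intro hh
              exact hne (by rw [show p = p' from hfst hh, show q = q' from hsnd hh])
            · rcases hcond with hh | hh | hh
              · exact Or.inl (Subtype.ext hh)
              · exact Or.inr (Or.inl (Subtype.ext hh))
              · exact Or.inr (Or.inr (Subtype.ext hh))
  · -- palette condition
    intro x
    by_cases hx : x = u
    · have hsub : {col | ∃ y, G.Adj y x ∧ c y x = col} ⊆ {cv, cw} := by
        rintro col ⟨y, hy, he⟩
        rcases hnb y (by rw [← hx]; exact hy.symm) with h1 | h1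
        · rw [h1, hx, hcvu] at he
          exact Or.inl he.symm
        · rw [h1, hx, hcwu] at he
          exact Or.inr he.symm
      calc {col | ∃ y, G.Adj y x ∧ c y x = col}.ncard
          ≤ ({cv, cw} : Set (Fin (G.maxDegree + 2))).ncard :=
            Set.ncard_le_ncard hsub (Set.toFinite _)
        _ ≤ 2 := by
            apply le_trans (Set.ncard_insert_le _ _)
            simp
    · by_cases hxv : x = v
      · have hsub : {col | ∃ y, G.Adj y x ∧ c y x = col}
            ⊆ {col | ∃ y, (G.induce {x | x ≠ u}).Adj y ⟨v, hvu⟩ ∧ c' y ⟨v, hvu⟩ = col} := by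
          rintro col ⟨y, hy, he⟩
          by_cases hyu : y = u
          · rw [hyu, hxv, hcuv] at he
            exact ⟨⟨w, hwu⟩, hwv', he⟩
          · rw [hcxy y x hyu hx, hmk x hx v hvu hxv] at he
            exact ⟨⟨y, hyu⟩, show G.Adj y v by rw [← hxv]; exact hy, he⟩
        exact le_trans (Set.ncard_le_ncard hsub (Set.toFinite _)) (hc'l ⟨v, hvu⟩)
      · by_cases hxw : x = w
        · have hsub : {col | ∃ y, G.Adj y x ∧ c y x = col}
              ⊆ {col | ∃ y, (G.induce {x | x ≠ u}).Adj y ⟨w, hwu⟩ ∧ c' y ⟨w, hwu⟩ = col} := by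
            rintro col ⟨y, hy, he⟩
            by_cases hyu : y = u
            · rw [hyu, hxw, hcuw] at he
              exact ⟨⟨v, hvu⟩, hvw', he⟩
            · rw [hcxy y x hyu hx, hmk x hx w hwu hxw] at he
              exact ⟨⟨y, hyu⟩, show G.Adj y w by rw [← hxw]; exact hy, he⟩
          exact le_trans (Set.ncard_le_ncard hsub (Set.toFinite _)) (hc'l ⟨w, hwu⟩)
        · have hsub : {col | ∃ y, G.Adj y x ∧ c y x = col}
              ⊆ {col | ∃ y, (G.induce {x | x ≠ u}).Adj y ⟨x, hx⟩ ∧ c' y ⟨x, hx⟩ = col} := by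
            rintro col ⟨y, hy, he⟩
            have hyu : y ≠ u := by
              intro hh
              rcases hnb x (by rw [← hh]; exact hy) with h1 | h1
              exacts [hxv h1, hxw h1]
            rw [hcxy y x hyu hx] at he
            exact ⟨⟨y, hyu⟩, hy, he⟩
          exact le_trans (Set.ncard_le_ncard hsub (Set.toFinite _)) (hc'l ⟨x, hx⟩)
end

section
/- Let G be a connected simple graph with maximum degree Δ ≥ 3, and let u be a vertex of degree 2 with neighbors v, w such that v and w lie in different connected components of G − u. If every connected component of G − u admits a (Δ+2, 2)-incidence coloring, then G admits a (Δ+2, 2)-incidence coloring. -/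
lemma fresh_color {k : ℕ} (F : Set (Fin k)) (h : F.ncard < k) : ∃ x, x ∉ F := by
  by_contra h'
  push_neg at h'
  have : F = Set.univ := Set.eq_univ_of_forall h'
  rw [this, Set.ncard_univ] at h
  simp at h

lemma combine {V : Type*} (G : SimpleGraph V)
    (u v w : V) (k : ℕ) (hk : 5 ≤ k) (hvw : v ≠ w)
    (Sv Sw : Set V)
    (hSvu : u ∉ Sv) (hSwu : u ∉ Sw)
    (hdisj : ∀ a, a ∈ Sv → a ∈ Sw → False)
    (hv : v ∈ Sv) (hw : w ∈ Sw)
    (hcover : ∀ a, a ≠ u → a ∈ Sv ∨ a ∈ Sw)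
    (hedgev : ∀ a b, G.Adj a b → a ∈ Sv → b ≠ u → b ∈ Sv)
    (hedgew : ∀ a b, G.Adj a b → a ∈ Sw → b ≠ u → b ∈ Sw)
    (hnbr : ∀ y, G.Adj u y → y = v ∨ y = w)
    (cV cW : V → V → Fin k)
    (hVp : ∀ a b a' b', a ∈ Sv → b ∈ Sv → a' ∈ Sv → b' ∈ Sv → G.Adj a b → G.Adj a' b' →
      (a, b) ≠ (a', b') → (a = a' ∨ b = a' ∨ a = b') → cV a b ≠ cV a' b')
    (hVi : ∀ t, t ∈ Sv → {col : Fin k | ∃ a, a ∈ Sv ∧ G.Adj a t ∧ cV a t = col}.ncard ≤ 2)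
    (hWp : ∀ a b a' b', a ∈ Sw → b ∈ Sw → a' ∈ Sw → b' ∈ Sw → G.Adj a b → G.Adj a' b' →
      (a, b) ≠ (a', b') → (a = a' ∨ b = a' ∨ a = b') → cW a b ≠ cW a' b')
    (hWi : ∀ t, t ∈ Sw → {col : Fin k | ∃ a, a ∈ Sw ∧ G.Adj a t ∧ cW a t = col}.ncard ≤ 2)
    (hAv : {col : Fin k | ∃ b, b ∈ Sv ∧ G.Adj v b ∧ cV v b = col}.ncard + 3 ≤ k)
    (hAw : {col : Fin k | ∃ b, b ∈ Sw ∧ G.Adj w b ∧ cW w b = col}.ncard + 3 ≤ k) :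
    HasIncColoring G k 2 := by
  classical
  have pair2 : ∀ a b : Fin k, ({a, b} : Set (Fin k)).ncard ≤ 2 := by
    intro a b
    apply le_trans (Set.ncard_insert_le _ _)
    simp
  have hvu : v ≠ u := fun h => hSvu (h ▸ hv)
  have hwu : w ≠ u := fun h => hSwu (h ▸ hw)
  have hvSw : v ∉ Sw := fun h => hdisj v hv h
  have hwSv : w ∉ Sv := fun h => hdisj w h hw
  set Av : Set (Fin k) := {col : Fin k | ∃ b, b ∈ Sv ∧ G.Adj v b ∧ cV v b = col} with hAvdef
  set Iv : Set (Fin k) := {col : Fin k | ∃ a, a ∈ Sv ∧ G.Adj a v ∧ cV a v = col} with hIvdef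
  set Aw : Set (Fin k) := {col : Fin k | ∃ b, b ∈ Sw ∧ G.Adj w b ∧ cW w b = col} with hAwdef
  set Iw : Set (Fin k) := {col : Fin k | ∃ a, a ∈ Sw ∧ G.Adj a w ∧ cW a w = col} with hIwdef
  have hIv2 : Iv.ncard ≤ 2 := hVi v hv
  have hIw2 : Iw.ncard ≤ 2 := hWi w hw
  have hAvIv : ∀ col, col ∈ Iv → col ∉ Av := by
    rintro col ⟨a, ha, hav, rfl⟩ ⟨b, hb, hvb, heq⟩
    exact hVp a v v b ha hv hv hb hav hvb
      (fun h => hav.ne (congrArg Prod.fst h)) (Or.inr (Or.inl rfl)) heq.symm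
  have hAwIw : ∀ col, col ∈ Iw → col ∉ Aw := by
    rintro col ⟨a, ha, hav, rfl⟩ ⟨b, hb, hvb, heq⟩
    exact hWp a w w b ha hw hw hb hav hvb
      (fun h => hav.ne (congrArg Prod.fst h)) (Or.inr (Or.inl rfl)) heq.symm
  -- choose p
  obtain ⟨p, hpAv, hp2⟩ : ∃ p, p ∉ Av ∧ (Iv ∪ {p}).ncard ≤ 2 := by
    by_cases hIvne : Iv.Nonempty
    · obtain ⟨p, hp⟩ := hIvne
      refine ⟨p, hAvIv p hp, ?_⟩
      rw [Set.union_eq_self_of_subset_right (Set.singleton_subset_iff.2 hp)]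
      exact hIv2
    · rw [Set.not_nonempty_iff_eq_empty] at hIvne
      obtain ⟨p, hp⟩ := fresh_color Av (by omega)
      refine ⟨p, hp, ?_⟩
      rw [hIvne, Set.empty_union, Set.ncard_singleton]
      omega
  -- choose q
  obtain ⟨q, hq⟩ : ∃ q, q ∉ Av ∪ (Iv ∪ {p}) := by
    apply fresh_color
    have := Set.ncard_union_le Av (Iv ∪ {p})
    omega
  have hqAv : q ∉ Av := fun h => hq (Or.inl h)
  have hqIv : q ∉ Iv := fun h => hq (Or.inr (Or.inl h))
  have hqp : q ≠ p := fun h => hq (Or.inr (Or.inr h))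
  -- choose sigma, x, y for the w-side
  obtain ⟨σ, x, y, hxAw, hxp, hxq, hx2, hyAw, hyIw, hyx, hyp⟩ :
      ∃ (σ : Equiv.Perm (Fin k)) (x y : Fin k), x ∉ σ '' Aw ∧ x ≠ p ∧ x ≠ q ∧
        (σ '' Iw ∪ {x}).ncard ≤ 2 ∧ y ∉ σ '' Aw ∧ y ∉ σ '' Iw ∧ y ≠ x ∧ y ≠ p := by
    by_cases hIwne : Iw.Nonempty
    · obtain ⟨i0, hi0⟩ := hIwne
      by_cases hIw1 : Iw ⊆ {i0}
      · -- |Iw| = 1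
        set σ := Equiv.swap p i0 with hσ
        have hσI : σ '' Iw ⊆ {p} := by
          intro z hz
          obtain ⟨i, hi, rfl⟩ := hz
          have : i = i0 := hIw1 hi
          simp [this, hσ, Equiv.swap_apply_right]
        have hAwcard : (σ '' Aw).ncard = Aw.ncard := Set.ncard_image_of_injective _ σ.injective
        obtain ⟨x, hx⟩ : ∃ x, x ∉ σ '' Aw ∪ {p, q} := by
          apply fresh_color
          have h1 := Set.ncard_union_le (σ '' Aw) ({p, q} : Set (Fin k))
          have h2 := pair2 p q
          omega
        have hxAw : x ∉ σ '' Aw := fun h => hx (Or.inl h)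
        have hxp : x ≠ p := fun h => hx (Or.inr (Or.inl h))
        have hxq : x ≠ q := fun h => hx (Or.inr (Or.inr h))
        obtain ⟨y, hy⟩ : ∃ y, y ∉ σ '' Aw ∪ {x, p} := by
          apply fresh_color
          have h1 := Set.ncard_union_le (σ '' Aw) ({x, p} : Set (Fin k))
          have h2 := pair2 x p
          omega
        have hyAw : y ∉ σ '' Aw := fun h => hy (Or.inl h)
        have hyx : y ≠ x := fun h => hy (Or.inr (Or.inl h))
        have hyp : y ≠ p := fun h => hy (Or.inr (Or.inr h))
        refine ⟨σ, x, y, hxAw, hxp, hxq, ?_, hyAw, fun h => hyp (hσI h), hyx, hyp⟩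
        have hsub : σ '' Iw ∪ {x} ⊆ {p, x} := by
          intro z hz
          rcases hz with hz | hz
          · exact Or.inl (hσI hz)
          · exact Or.inr hz
        exact le_trans (Set.ncard_le_ncard hsub (Set.toFinite _)) (pair2 p x)
      · -- |Iw| ≥ 2
        rw [Set.not_subset] at hIw1
        obtain ⟨i1, hi1, hi1ne⟩ := hIw1
        rw [Set.mem_singleton_iff] at hi1ne
        obtain ⟨r, hr⟩ : ∃ r, r ∉ ({p, q} : Set (Fin k)) := by
          apply fresh_color
          have := pair2 p q
          omega
        have hrp : r ≠ p := fun h => hr (Or.inl h)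
        have hrq : r ≠ q := fun h => hr (Or.inr h)
        set τ := Equiv.swap p i0 with hτ
        set j := τ i1 with hj
        have hjp : j ≠ p := by
          rw [hj]
          intro h
          have : τ i1 = τ i0 := by rw [h, hτ, Equiv.swap_apply_right]
          exact hi1ne (τ.injective this)
        set σ := τ.trans (Equiv.swap j r) with hσ
        have hσi0 : σ i0 = p := by
          rw [hσ]
          simp only [Equiv.trans_apply, hτ, Equiv.swap_apply_right]
          exact Equiv.swap_apply_of_ne_of_ne (Ne.symm hjp) (Ne.symm hrp)
        have hσi1 : σ i1 = r := by
          rw [hσ]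
          simp only [Equiv.trans_apply, ← hj]
          exact Equiv.swap_apply_left _ _
        have hpIm : p ∈ σ '' Iw := ⟨i0, hi0, hσi0⟩
        have hrIm : r ∈ σ '' Iw := ⟨i1, hi1, hσi1⟩
        have hIwAw : ∀ col, col ∈ σ '' Iw → col ∉ σ '' Aw := by
          rintro col ⟨i, hi, rfl⟩ ⟨a, ha, haeq⟩
          exact hAwIw i hi (by rwa [σ.injective haeq] at ha)
        obtain ⟨y, hy⟩ : ∃ y, y ∉ σ '' Aw ∪ σ '' Iw := by
          apply fresh_color
          have h1 := Set.ncard_union_le (σ '' Aw) (σ '' Iw)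
          have h2 : (σ '' Aw).ncard = Aw.ncard := Set.ncard_image_of_injective _ σ.injective
          have h3 : (σ '' Iw).ncard = Iw.ncard := Set.ncard_image_of_injective _ σ.injective
          omega
        have hyAw : y ∉ σ '' Aw := fun h => hy (Or.inl h)
        have hyIw : y ∉ σ '' Iw := fun h => hy (Or.inr h)
        refine ⟨σ, r, y, hIwAw r hrIm, hrp, hrq, ?_, hyAw, hyIw,
          fun h => hyIw (h ▸ hrIm), fun h => hyIw (h ▸ hpIm)⟩
        rw [Set.union_eq_self_of_subset_right (Set.singleton_subset_iff.2 hrIm),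
          Set.ncard_image_of_injective _ σ.injective]
        exact hIw2
    · -- Iw empty
      rw [Set.not_nonempty_iff_eq_empty] at hIwne
      set σ := Equiv.refl (Fin k) with hσ
      have hAwcard : (σ '' Aw).ncard = Aw.ncard := Set.ncard_image_of_injective _ σ.injective
      obtain ⟨x, hx⟩ : ∃ x, x ∉ σ '' Aw ∪ {p, q} := by
        apply fresh_color
        have h1 := Set.ncard_union_le (σ '' Aw) ({p, q} : Set (Fin k))
        have h2 := pair2 p q
        omega
      obtain ⟨y, hy⟩ : ∃ y, y ∉ σ '' Aw ∪ {x, p} := by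
        apply fresh_color
        have h1 := Set.ncard_union_le (σ '' Aw) ({x, p} : Set (Fin k))
        have h2 := pair2 x p
        omega
      refine ⟨σ, x, y, fun h => hx (Or.inl h), fun h => hx (Or.inr (Or.inl h)),
        fun h => hx (Or.inr (Or.inr h)), ?_, fun h => hy (Or.inl h),
        by simp [hIwne], fun h => hy (Or.inr (Or.inl h)), fun h => hy (Or.inr (Or.inr h))⟩
      rw [hIwne, Set.image_empty, Set.empty_union, Set.ncard_singleton]
      omega
    -- the combined coloring
  set c : V → V → Fin k := fun a b =>
    if a = u then (if b = v then p else x)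
    else if b = u then (if a = v then q else y)
    else if a ∈ Sv then cV a b else σ (cW a b) with hc
  have hcuv : c u v = p := by rw [hc]; simp
  have hcuw : c u w = x := by rw [hc]; simp [Ne.symm hvw]
  have hcvu : c v u = q := by rw [hc]; simp [hvu]
  have hcwu : c w u = y := by rw [hc]; simp [hwu, Ne.symm hvw]
  have hcV : ∀ a b, a ∈ Sv → b ∈ Sv → c a b = cV a b := by
    intro a b ha hb
    have hau : a ≠ u := fun h => hSvu (h ▸ ha)
    have hbu : b ≠ u := fun h => hSvu (h ▸ hb)
    rw [hc]; simp [hau, hbu, ha]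
  have hcW : ∀ a b, a ∈ Sw → b ∈ Sw → c a b = σ (cW a b) := by
    intro a b ha hb
    have hau : a ≠ u := fun h => hSwu (h ▸ ha)
    have hbu : b ≠ u := fun h => hSwu (h ▸ hb)
    have haSv : a ∉ Sv := fun h => hdisj a h ha
    rw [hc]; simp [hau, hbu, haSv]
  have hval : ∀ a b, G.Adj a b →
      (a = u ∧ b = v ∧ c a b = p) ∨ (a = u ∧ b = w ∧ c a b = x) ∨
      (a = v ∧ b = u ∧ c a b = q) ∨ (a = w ∧ b = u ∧ c a b = y) ∨
      (a ∈ Sv ∧ b ∈ Sv ∧ c a b = cV a b) ∨ (a ∈ Sw ∧ b ∈ Sw ∧ c a b = σ (cW a b)) := by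
    intro a b hab
    by_cases hau : a = u
    · subst hau
      rcases hnbr b hab with rfl | rfl
      · exact Or.inl ⟨rfl, rfl, hcuv⟩
      · exact Or.inr (Or.inl ⟨rfl, rfl, hcuw⟩)
    · by_cases hbu : b = u
      · subst hbu
        rcases hnbr a hab.symm with rfl | rfl
        · exact Or.inr (Or.inr (Or.inl ⟨rfl, rfl, hcvu⟩))
        · exact Or.inr (Or.inr (Or.inr (Or.inl ⟨rfl, rfl, hcwu⟩)))
      · rcases hcover a hau with ha | ha
        · have hb := hedgev a b hab ha hbu
          exact Or.inr (Or.inr (Or.inr (Or.inr (Or.inl ⟨ha, hb, hcV a b ha hb⟩))))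
        · have hb := hedgew a b hab ha hbu
          exact Or.inr (Or.inr (Or.inr (Or.inr (Or.inr ⟨ha, hb, hcW a b ha hb⟩))))
  refine ⟨c, ?_, ?_⟩
  · -- properness
    intro a b a' b' hab hab' hne hlink
    rcases hval a b hab with ⟨hA, hB, h1⟩ | ⟨hA, hB, h1⟩ | ⟨hA, hB, h1⟩ |
      ⟨hA, hB, h1⟩ | ⟨ha, hb, h1⟩ | ⟨ha, hb, h1⟩ <;>
      rcases hval a' b' hab' with ⟨hA', hB', h2⟩ | ⟨hA', hB', h2⟩ | ⟨hA', hB', h2⟩ |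
        ⟨hA', hB', h2⟩ | ⟨ha', hb', h2⟩ | ⟨ha', hb', h2⟩ <;>
      rw [h1, h2]
    · exact absurd (by rw [hA, hB, hA', hB']) hne
    · exact Ne.symm hxp
    · exact Ne.symm hqp
    · exact Ne.symm hyp
    · rcases hlink with h | h | h
      · exact absurd ha' (by rw [h.symm.trans hA]; exact hSvu)
      · intro hh
        rw [h.symm.trans hB] at hab' hh
        exact hpAv ⟨b', hb', hab', hh.symm⟩
      · exact absurd hb' (by rw [h.symm.trans hA]; exact hSvu)
    · rcases hlink with h | h | h
      · exact absurd ha' (by rw [h.symm.trans hA]; exact hSwu)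
      · exact absurd ha' (by rw [h.symm.trans hB]; exact hvSw)
      · exact absurd hb' (by rw [h.symm.trans hA]; exact hSwu)
    · exact hxp
    · exact absurd (by rw [hA, hB, hA', hB']) hne
    · exact hxq
    · exact Ne.symm hyx
    · rcases hlink with h | h | h
      · exact absurd ha' (by rw [h.symm.trans hA]; exact hSvu)
      · exact absurd ha' (by rw [h.symm.trans hB]; exact hwSv)
      · exact absurd hb' (by rw [h.symm.trans hA]; exact hSvu)
    · rcases hlink with h | h | h
      · exact absurd ha' (by rw [h.symm.trans hA]; exact hSwu)
      · intro hh
        rw [h.symm.trans hB] at hab' hh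
        exact hxAw ⟨cW w b', ⟨b', hb', hab', rfl⟩, hh.symm⟩
      · exact absurd hb' (by rw [h.symm.trans hA]; exact hSwu)
    · exact hqp
    · exact Ne.symm hxq
    · exact absurd (by rw [hA, hB, hA', hB']) hne
    · rcases hlink with h | h | h
      · exact absurd (hA.symm.trans (h.trans hA')) hvw
      · exact absurd (hB.symm.trans (h.trans hA')).symm hwu
      · exact absurd (hA.symm.trans (h.trans hB')) hvu
    · rcases hlink with h | h | h
      · intro hh
        rw [h.symm.trans hA] at hab' hh
        exact hqAv ⟨b', hb', hab', hh.symm⟩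
      · exact absurd ha' (by rw [h.symm.trans hB]; exact hSvu)
      · intro hh
        rw [h.symm.trans hA] at hab' hh
        exact hqIv ⟨a', ha', hab', hh.symm⟩
    · rcases hlink with h | h | h
      · exact absurd ha' (by rw [h.symm.trans hA]; exact hvSw)
      · exact absurd ha' (by rw [h.symm.trans hB]; exact hSwu)
      · exact absurd hb' (by rw [h.symm.trans hA]; exact hvSw)
    · exact hyp
    · exact hyx
    · rcases hlink with h | h | h
      · exact absurd (hA.symm.trans (h.trans hA')).symm hvw
      · exact absurd (hB.symm.trans (h.trans hA')).symm hvu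
      · exact absurd (hA.symm.trans (h.trans hB')) hwu
    · exact absurd (by rw [hA, hB, hA', hB']) hne
    · rcases hlink with h | h | h
      · exact absurd ha' (by rw [h.symm.trans hA]; exact hwSv)
      · exact absurd ha' (by rw [h.symm.trans hB]; exact hSvu)
      · exact absurd hb' (by rw [h.symm.trans hA]; exact hwSv)
    · rcases hlink with h | h | h
      · intro hh
        rw [h.symm.trans hA] at hab' hh
        exact hyAw ⟨cW w b', ⟨b', hb', hab', rfl⟩, hh.symm⟩
      · exact absurd ha' (by rw [h.symm.trans hB]; exact hSwu)
      · intro hh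
        rw [h.symm.trans hA] at hab' hh
        exact hyIw ⟨cW a' w, ⟨a', ha', hab', rfl⟩, hh.symm⟩
    · rcases hlink with h | h | h
      · exact absurd ha (by rw [h.trans hA']; exact hSvu)
      · exact absurd hb (by rw [h.trans hA']; exact hSvu)
      · intro hh
        rw [h.trans hB'] at hab hh
        exact hpAv ⟨b, hb, hab, hh⟩
    · rcases hlink with h | h | h
      · exact absurd ha (by rw [h.trans hA']; exact hSvu)
      · exact absurd hb (by rw [h.trans hA']; exact hSvu)
      · exact absurd ha (by rw [h.trans hB']; exact hwSv)
    · rcases hlink with h | h | h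
      · intro hh
        rw [h.trans hA'] at hab hh
        exact hqAv ⟨b, hb, hab, hh⟩
      · intro hh
        rw [h.trans hA'] at hab hh
        exact hqIv ⟨a, ha, hab, hh⟩
      · exact absurd ha (by rw [h.trans hB']; exact hSvu)
    · rcases hlink with h | h | h
      · exact absurd ha (by rw [h.trans hA']; exact hwSv)
      · exact absurd hb (by rw [h.trans hA']; exact hwSv)
      · exact absurd ha (by rw [h.trans hB']; exact hSvu)
    · exact hVp a b a' b' ha hb ha' hb' hab hab' hne hlink
    · rcases hlink with h | h | h
      · exact (hdisj a ha (by rw [h]; exact ha')).elim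
      · exact (hdisj b hb (by rw [h]; exact ha')).elim
      · exact (hdisj a ha (by rw [h]; exact hb')).elim
    · rcases hlink with h | h | h
      · exact absurd ha (by rw [h.trans hA']; exact hSwu)
      · exact absurd hb (by rw [h.trans hA']; exact hSwu)
      · exact absurd ha (by rw [h.trans hB']; exact hvSw)
    · rcases hlink with h | h | h
      · exact absurd ha (by rw [h.trans hA']; exact hSwu)
      · exact absurd hb (by rw [h.trans hA']; exact hSwu)
      · intro hh
        rw [h.trans hB'] at hab hh
        exact hxAw ⟨cW w b, ⟨b, hb, hab, rfl⟩, hh⟩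
    · rcases hlink with h | h | h
      · exact absurd ha (by rw [h.trans hA']; exact hvSw)
      · exact absurd hb (by rw [h.trans hA']; exact hvSw)
      · exact absurd ha (by rw [h.trans hB']; exact hSwu)
    · rcases hlink with h | h | h
      · intro hh
        rw [h.trans hA'] at hab hh
        exact hyAw ⟨cW w b, ⟨b, hb, hab, rfl⟩, hh⟩
      · intro hh
        rw [h.trans hA'] at hab hh
        exact hyIw ⟨cW a w, ⟨a, ha, hab, rfl⟩, hh⟩
      · exact absurd ha (by rw [h.trans hB']; exact hSwu)
    · rcases hlink with h | h | h
      · exact (hdisj a (by rw [h]; exact ha') ha).elim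
      · exact (hdisj b (by rw [h]; exact ha') hb).elim
      · exact (hdisj a (by rw [h]; exact hb') ha).elim
    · exact fun hh => hWp a b a' b' ha hb ha' hb' hab hab' hne hlink (σ.injective hh)
  · -- incoming colour bound
    intro t
    by_cases htu : t = u
    · subst htu
      have hsub : {col : Fin k | ∃ a, G.Adj a t ∧ c a t = col} ⊆ {q, y} := by
        rintro col ⟨a, hat, hcol⟩
        rcases hnbr a hat.symm with rfl | rfl
        · rw [hcvu] at hcol
          exact Or.inl hcol.symm
        · rw [hcwu] at hcol
          exact Or.inr hcol.symm
      exact le_trans (Set.ncard_le_ncard hsub (Set.toFinite _)) (pair2 q y)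
    · by_cases htv : t = v
      · subst htv
        have hsub : {col : Fin k | ∃ a, G.Adj a t ∧ c a t = col} ⊆ Iv ∪ {p} := by
          rintro col ⟨a, hat, hcol⟩
          by_cases hau : a = u
          · subst hau
            rw [hcuv] at hcol
            exact Or.inr hcol.symm
          · rcases hcover a hau with ha | ha
            · rw [hcV a t ha hv] at hcol
              exact Or.inl ⟨a, ha, hat, hcol⟩
            · exact absurd (hedgew a t hat ha hvu) hvSw
        exact le_trans (Set.ncard_le_ncard hsub (Set.toFinite _)) hp2
      · by_cases htw : t = w
        · subst htw
          have hsub : {col : Fin k | ∃ a, G.Adj a t ∧ c a t = col} ⊆ σ '' Iw ∪ {x} := by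
            rintro col ⟨a, hat, hcol⟩
            by_cases hau : a = u
            · subst hau
              rw [hcuw] at hcol
              exact Or.inr hcol.symm
            · rcases hcover a hau with ha | ha
              · exact absurd (hedgev a t hat ha hwu) hwSv
              · rw [hcW a t ha hw] at hcol
                exact Or.inl ⟨cW a t, ⟨a, ha, hat, rfl⟩, hcol⟩
          exact le_trans (Set.ncard_le_ncard hsub (Set.toFinite _)) hx2
        · rcases hcover t htu with ht | ht
          · have hsub : {col : Fin k | ∃ a, G.Adj a t ∧ c a t = col} ⊆
                {col : Fin k | ∃ a, a ∈ Sv ∧ G.Adj a t ∧ cV a t = col} := by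
              rintro col ⟨a, hat, hcol⟩
              by_cases hau : a = u
              · subst hau
                rcases hnbr t hat with rfl | rfl
                · exact absurd rfl htv
                · exact absurd rfl htw
              · rcases hcover a hau with ha | ha
                · rw [hcV a t ha ht] at hcol
                  exact ⟨a, ha, hat, hcol⟩
                · exact absurd ht (fun hh => hdisj t hh (hedgew a t hat ha htu))
            exact le_trans (Set.ncard_le_ncard hsub (Set.toFinite _)) (hVi t ht)
          · have hsub : {col : Fin k | ∃ a, G.Adj a t ∧ c a t = col} ⊆
                σ '' {col : Fin k | ∃ a, a ∈ Sw ∧ G.Adj a t ∧ cW a t = col} := by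
              rintro col ⟨a, hat, hcol⟩
              by_cases hau : a = u
              · subst hau
                rcases hnbr t hat with rfl | rfl
                · exact absurd rfl htv
                · exact absurd rfl htw
              · rcases hcover a hau with ha | ha
                · exact absurd ht (fun hh => hdisj t (hedgev a t hat ha htu) hh)
                · rw [hcW a t ha ht] at hcol
                  exact ⟨cW a t, ⟨a, ha, hat, rfl⟩, hcol⟩
            refine le_trans (Set.ncard_le_ncard hsub (Set.toFinite _)) ?_
            rw [Set.ncard_image_of_injective _ σ.injective]
            exact hWi t ht


/-- If G is connected with Δ ≥ 3, u has degree 2 with neighbors v, w lying in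
different components of G - u, and every component of G - u has a (Δ+2,2)-incidence
coloring, then so does G. -/
theorem stmt_6 {V : Type*} [Fintype V] [DecidableEq V] (G : SimpleGraph V)
    [DecidableRel G.Adj] (u v w : V) (hconn : G.Connected) (hΔ : 3 ≤ G.maxDegree)
    (hdeg : G.degree u = 2) (huv : G.Adj u v) (huw : G.Adj u w) (hvw : v ≠ w)
    (hvu : v ≠ u) (hwu : w ≠ u)
    (hsep : ¬(G.induce {x | x ≠ u}).Reachable ⟨v, hvu⟩ ⟨w, hwu⟩)
    (hcomp : ∀ C : (G.induce {x | x ≠ u}).ConnectedComponent,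
      HasIncColoring ((G.induce {x | x ≠ u}).induce C.supp) (G.maxDegree + 2) 2) :
    HasIncColoring G (G.maxDegree + 2) 2 := by
  classical
  -- neighbours of u are exactly v and w
  have hnbr : ∀ y, G.Adj u y → y = v ∨ y = w := by
    have hsub : ({v, w} : Finset V) ⊆ G.neighborFinset u := by
      intro y hy
      simp only [Finset.mem_insert, Finset.mem_singleton] at hy
      rcases hy with rfl | rfl <;> simp [huv, huw]
    have hcard : (G.neighborFinset u).card ≤ ({v, w} : Finset V).card := by
      rw [G.card_neighborFinset_eq_degree, hdeg, Finset.card_insert_of_notMem (by simp [hvw]),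
        Finset.card_singleton]
    have h := Finset.eq_of_subset_of_card_le hsub hcard
    intro y hy
    have hmem : y ∈ G.neighborFinset u := by simpa using hy
    rw [← h] at hmem
    simpa using hmem
  have hSvu : u ∉ {a : V | ∃ h : a ≠ u, (G.induce {x : V | x ≠ u}).Reachable ⟨a, h⟩ ⟨v, hvu⟩} := by
    rintro ⟨h, -⟩
    exact h rfl
  have hSwu : u ∉ {a : V | ∃ h : a ≠ u, (G.induce {x : V | x ≠ u}).Reachable ⟨a, h⟩ ⟨w, hwu⟩} := by
    rintro ⟨h, -⟩
    exact h rfl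
  have hdisj : ∀ a, a ∈ {a : V | ∃ h : a ≠ u, (G.induce {x : V | x ≠ u}).Reachable ⟨a, h⟩ ⟨v, hvu⟩} → a ∈ {a : V | ∃ h : a ≠ u, (G.induce {x : V | x ≠ u}).Reachable ⟨a, h⟩ ⟨w, hwu⟩} → False := by
    rintro a ⟨h1, r1⟩ ⟨h2, r2⟩
    exact hsep (r1.symm.trans r2)
  have hv : v ∈ {a : V | ∃ h : a ≠ u, (G.induce {x : V | x ≠ u}).Reachable ⟨a, h⟩ ⟨v, hvu⟩} := ⟨hvu, SimpleGraph.Reachable.refl _⟩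
  have hw : w ∈ {a : V | ∃ h : a ≠ u, (G.induce {x : V | x ≠ u}).Reachable ⟨a, h⟩ ⟨w, hwu⟩} := ⟨hwu, SimpleGraph.Reachable.refl _⟩
  have hcover : ∀ a, a ≠ u → a ∈ {a : V | ∃ h : a ≠ u, (G.induce {x : V | x ≠ u}).Reachable ⟨a, h⟩ ⟨v, hvu⟩} ∨ a ∈ {a : V | ∃ h : a ≠ u, (G.induce {x : V | x ≠ u}).Reachable ⟨a, h⟩ ⟨w, hwu⟩} := by
    have key : ∀ (s e : V) (wk : G.Walk s e), e = u → s ≠ u →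
        s ∈ {a : V | ∃ h : a ≠ u, (G.induce {x : V | x ≠ u}).Reachable ⟨a, h⟩ ⟨v, hvu⟩} ∨ s ∈ {a : V | ∃ h : a ≠ u, (G.induce {x : V | x ≠ u}).Reachable ⟨a, h⟩ ⟨w, hwu⟩} := by
      intro s e wk
      induction wk with
      | nil => intro heq hne; exact absurd heq hne
      | @cons sa sb se hadj tail ih =>
        intro heq hne
        by_cases hsb : sb = u
        · rw [hsb] at hadj
          rcases hnbr sa hadj.symm with h | h
          · exact Or.inl (by rw [h]; exact hv)
          · exact Or.inr (by rw [h]; exact hw)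
        · have hadj' : (G.induce {x : V | x ≠ u}).Adj ⟨sa, hne⟩ ⟨sb, hsb⟩ := hadj
          rcases ih heq hsb with ⟨h1, r1⟩ | ⟨h1, r1⟩
          · exact Or.inl ⟨hne, hadj'.reachable.trans r1⟩
          · exact Or.inr ⟨hne, hadj'.reachable.trans r1⟩
    intro a hau
    obtain ⟨wk⟩ := hconn.preconnected a u
    exact key a u wk rfl hau
  have hedgev : ∀ a b, G.Adj a b → a ∈ {a : V | ∃ h : a ≠ u, (G.induce {x : V | x ≠ u}).Reachable ⟨a, h⟩ ⟨v, hvu⟩} → b ≠ u → b ∈ {a : V | ∃ h : a ≠ u, (G.induce {x : V | x ≠ u}).Reachable ⟨a, h⟩ ⟨v, hvu⟩} := by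
    rintro a b hab ⟨ha, ra⟩ hbu
    have hadj' : (G.induce {x : V | x ≠ u}).Adj ⟨b, hbu⟩ ⟨a, ha⟩ := hab.symm
    exact ⟨hbu, hadj'.reachable.trans ra⟩
  have hedgew : ∀ a b, G.Adj a b → a ∈ {a : V | ∃ h : a ≠ u, (G.induce {x : V | x ≠ u}).Reachable ⟨a, h⟩ ⟨w, hwu⟩} → b ≠ u → b ∈ {a : V | ∃ h : a ≠ u, (G.induce {x : V | x ≠ u}).Reachable ⟨a, h⟩ ⟨w, hwu⟩} := by
    rintro a b hab ⟨ha, ra⟩ hbu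
    have hadj' : (G.induce {x : V | x ≠ u}).Adj ⟨b, hbu⟩ ⟨a, ha⟩ := hab.symm
    exact ⟨hbu, hadj'.reachable.trans ra⟩
  obtain ⟨cv, hcv1, hcv2⟩ := hcomp ((G.induce {x : V | x ≠ u}).connectedComponentMk ⟨v, hvu⟩)
  obtain ⟨cw, hcw1, hcw2⟩ := hcomp ((G.induce {x : V | x ≠ u}).connectedComponentMk ⟨w, hwu⟩)
  have memCv : ∀ (a : V) (h : a ∈ {a : V | ∃ h : a ≠ u, (G.induce {x : V | x ≠ u}).Reachable ⟨a, h⟩ ⟨v, hvu⟩}),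
      (⟨a, Exists.choose h⟩ : ↥{x : V | x ≠ u}) ∈ ((G.induce {x : V | x ≠ u}).connectedComponentMk ⟨v, hvu⟩).supp := by
    intro a h
    rw [SimpleGraph.ConnectedComponent.mem_supp_iff]
    exact SimpleGraph.ConnectedComponent.sound (Exists.choose_spec h)
  have memCw : ∀ (a : V) (h : a ∈ {a : V | ∃ h : a ≠ u, (G.induce {x : V | x ≠ u}).Reachable ⟨a, h⟩ ⟨w, hwu⟩}),
      (⟨a, Exists.choose h⟩ : ↥{x : V | x ≠ u}) ∈ ((G.induce {x : V | x ≠ u}).connectedComponentMk ⟨w, hwu⟩).supp := by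
    intro a h
    rw [SimpleGraph.ConnectedComponent.mem_supp_iff]
    exact SimpleGraph.ConnectedComponent.sound (Exists.choose_spec h)
  have cVeq : ∀ (a b : V) (ha : a ∈ {a : V | ∃ h : a ≠ u, (G.induce {x : V | x ≠ u}).Reachable ⟨a, h⟩ ⟨v, hvu⟩}) (hb : b ∈ {a : V | ∃ h : a ≠ u, (G.induce {x : V | x ≠ u}).Reachable ⟨a, h⟩ ⟨v, hvu⟩}),
      (fun a b => if h : a ∈ {a : V | ∃ h : a ≠ u, (G.induce {x : V | x ≠ u}).Reachable ⟨a, h⟩ ⟨v, hvu⟩} ∧ b ∈ {a : V | ∃ h : a ≠ u, (G.induce {x : V | x ≠ u}).Reachable ⟨a, h⟩ ⟨v, hvu⟩} then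
      cv ⟨⟨a, Exists.choose h.1⟩, memCv a h.1⟩ ⟨⟨b, Exists.choose h.2⟩, memCv b h.2⟩ else 0) a b =
      cv ⟨⟨a, Exists.choose ha⟩, memCv a ha⟩ ⟨⟨b, Exists.choose hb⟩, memCv b hb⟩ :=
    fun a b ha hb => dif_pos ⟨ha, hb⟩
  have cWeq : ∀ (a b : V) (ha : a ∈ {a : V | ∃ h : a ≠ u, (G.induce {x : V | x ≠ u}).Reachable ⟨a, h⟩ ⟨w, hwu⟩}) (hb : b ∈ {a : V | ∃ h : a ≠ u, (G.induce {x : V | x ≠ u}).Reachable ⟨a, h⟩ ⟨w, hwu⟩}),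
      (fun a b => if h : a ∈ {a : V | ∃ h : a ≠ u, (G.induce {x : V | x ≠ u}).Reachable ⟨a, h⟩ ⟨w, hwu⟩} ∧ b ∈ {a : V | ∃ h : a ≠ u, (G.induce {x : V | x ≠ u}).Reachable ⟨a, h⟩ ⟨w, hwu⟩} then
      cw ⟨⟨a, Exists.choose h.1⟩, memCw a h.1⟩ ⟨⟨b, Exists.choose h.2⟩, memCw b h.2⟩ else 0) a b =
      cw ⟨⟨a, Exists.choose ha⟩, memCw a ha⟩ ⟨⟨b, Exists.choose hb⟩, memCw b hb⟩ :=
    fun a b ha hb => dif_pos ⟨ha, hb⟩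
  have hVp : ∀ a b a' b', a ∈ {a : V | ∃ h : a ≠ u, (G.induce {x : V | x ≠ u}).Reachable ⟨a, h⟩ ⟨v, hvu⟩} → b ∈ {a : V | ∃ h : a ≠ u, (G.induce {x : V | x ≠ u}).Reachable ⟨a, h⟩ ⟨v, hvu⟩} → a' ∈ {a : V | ∃ h : a ≠ u, (G.induce {x : V | x ≠ u}).Reachable ⟨a, h⟩ ⟨v, hvu⟩} → b' ∈ {a : V | ∃ h : a ≠ u, (G.induce {x : V | x ≠ u}).Reachable ⟨a, h⟩ ⟨v, hvu⟩} →
      G.Adj a b → G.Adj a' b' → (a, b) ≠ (a', b') → (a = a' ∨ b = a' ∨ a = b') →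
      (fun a b => if h : a ∈ {a : V | ∃ h : a ≠ u, (G.induce {x : V | x ≠ u}).Reachable ⟨a, h⟩ ⟨v, hvu⟩} ∧ b ∈ {a : V | ∃ h : a ≠ u, (G.induce {x : V | x ≠ u}).Reachable ⟨a, h⟩ ⟨v, hvu⟩} then
      cv ⟨⟨a, Exists.choose h.1⟩, memCv a h.1⟩ ⟨⟨b, Exists.choose h.2⟩, memCv b h.2⟩ else 0) a b ≠ (fun a b => if h : a ∈ {a : V | ∃ h : a ≠ u, (G.induce {x : V | x ≠ u}).Reachable ⟨a, h⟩ ⟨v, hvu⟩} ∧ b ∈ {a : V | ∃ h : a ≠ u, (G.induce {x : V | x ≠ u}).Reachable ⟨a, h⟩ ⟨v, hvu⟩} then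
      cv ⟨⟨a, Exists.choose h.1⟩, memCv a h.1⟩ ⟨⟨b, Exists.choose h.2⟩, memCv b h.2⟩ else 0) a' b' := by
    intro a b a' b' ha hb ha' hb' hab hab' hne hlink
    rw [cVeq a b ha hb, cVeq a' b' ha' hb']
    refine hcv1 _ _ _ _ hab hab' ?_ ?_
    · exact fun h => hne (congrArg (fun z => (z.1.1.1, z.2.1.1)) h)
    · rcases hlink with h | h | h
      · exact Or.inl (Subtype.ext (Subtype.ext h))
      · exact Or.inr (Or.inl (Subtype.ext (Subtype.ext h)))
      · exact Or.inr (Or.inr (Subtype.ext (Subtype.ext h)))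
  have hWp : ∀ a b a' b', a ∈ {a : V | ∃ h : a ≠ u, (G.induce {x : V | x ≠ u}).Reachable ⟨a, h⟩ ⟨w, hwu⟩} → b ∈ {a : V | ∃ h : a ≠ u, (G.induce {x : V | x ≠ u}).Reachable ⟨a, h⟩ ⟨w, hwu⟩} → a' ∈ {a : V | ∃ h : a ≠ u, (G.induce {x : V | x ≠ u}).Reachable ⟨a, h⟩ ⟨w, hwu⟩} → b' ∈ {a : V | ∃ h : a ≠ u, (G.induce {x : V | x ≠ u}).Reachable ⟨a, h⟩ ⟨w, hwu⟩} →
      G.Adj a b → G.Adj a' b' → (a, b) ≠ (a', b') → (a = a' ∨ b = a' ∨ a = b') →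
      (fun a b => if h : a ∈ {a : V | ∃ h : a ≠ u, (G.induce {x : V | x ≠ u}).Reachable ⟨a, h⟩ ⟨w, hwu⟩} ∧ b ∈ {a : V | ∃ h : a ≠ u, (G.induce {x : V | x ≠ u}).Reachable ⟨a, h⟩ ⟨w, hwu⟩} then
      cw ⟨⟨a, Exists.choose h.1⟩, memCw a h.1⟩ ⟨⟨b, Exists.choose h.2⟩, memCw b h.2⟩ else 0) a b ≠ (fun a b => if h : a ∈ {a : V | ∃ h : a ≠ u, (G.induce {x : V | x ≠ u}).Reachable ⟨a, h⟩ ⟨w, hwu⟩} ∧ b ∈ {a : V | ∃ h : a ≠ u, (G.induce {x : V | x ≠ u}).Reachable ⟨a, h⟩ ⟨w, hwu⟩} then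
      cw ⟨⟨a, Exists.choose h.1⟩, memCw a h.1⟩ ⟨⟨b, Exists.choose h.2⟩, memCw b h.2⟩ else 0) a' b' := by
    intro a b a' b' ha hb ha' hb' hab hab' hne hlink
    rw [cWeq a b ha hb, cWeq a' b' ha' hb']
    refine hcw1 _ _ _ _ hab hab' ?_ ?_
    · exact fun h => hne (congrArg (fun z => (z.1.1.1, z.2.1.1)) h)
    · rcases hlink with h | h | h
      · exact Or.inl (Subtype.ext (Subtype.ext h))
      · exact Or.inr (Or.inl (Subtype.ext (Subtype.ext h)))
      · exact Or.inr (Or.inr (Subtype.ext (Subtype.ext h)))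
  have hVi : ∀ t, t ∈ {a : V | ∃ h : a ≠ u, (G.induce {x : V | x ≠ u}).Reachable ⟨a, h⟩ ⟨v, hvu⟩} →
      {col : Fin (G.maxDegree + 2) | ∃ a, a ∈ {a : V | ∃ h : a ≠ u, (G.induce {x : V | x ≠ u}).Reachable ⟨a, h⟩ ⟨v, hvu⟩} ∧ G.Adj a t ∧ (fun a b => if h : a ∈ {a : V | ∃ h : a ≠ u, (G.induce {x : V | x ≠ u}).Reachable ⟨a, h⟩ ⟨v, hvu⟩} ∧ b ∈ {a : V | ∃ h : a ≠ u, (G.induce {x : V | x ≠ u}).Reachable ⟨a, h⟩ ⟨v, hvu⟩} then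
      cv ⟨⟨a, Exists.choose h.1⟩, memCv a h.1⟩ ⟨⟨b, Exists.choose h.2⟩, memCv b h.2⟩ else 0) a t = col}.ncard ≤ 2 := by
    intro t ht
    have hsub : {col : Fin (G.maxDegree + 2) | ∃ a, a ∈ {a : V | ∃ h : a ≠ u, (G.induce {x : V | x ≠ u}).Reachable ⟨a, h⟩ ⟨v, hvu⟩} ∧ G.Adj a t ∧ (fun a b => if h : a ∈ {a : V | ∃ h : a ≠ u, (G.induce {x : V | x ≠ u}).Reachable ⟨a, h⟩ ⟨v, hvu⟩} ∧ b ∈ {a : V | ∃ h : a ≠ u, (G.induce {x : V | x ≠ u}).Reachable ⟨a, h⟩ ⟨v, hvu⟩} then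
      cv ⟨⟨a, Exists.choose h.1⟩, memCv a h.1⟩ ⟨⟨b, Exists.choose h.2⟩, memCv b h.2⟩ else 0) a t = col} ⊆
        {col : Fin (G.maxDegree + 2) | ∃ a2, ((G.induce {x : V | x ≠ u}).induce ((G.induce {x : V | x ≠ u}).connectedComponentMk ⟨v, hvu⟩).supp).Adj a2
          ⟨⟨t, Exists.choose ht⟩, memCv t ht⟩ ∧ cv a2 ⟨⟨t, Exists.choose ht⟩, memCv t ht⟩ = col} := by
      rintro col ⟨a, ha, hat, hcol⟩
      exact ⟨⟨⟨a, Exists.choose ha⟩, memCv a ha⟩, hat, by rw [← cVeq a t ha ht]; exact hcol⟩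
    exact le_trans (Set.ncard_le_ncard hsub (Set.toFinite _))
      (hcv2 ⟨⟨t, Exists.choose ht⟩, memCv t ht⟩)
  have hWi : ∀ t, t ∈ {a : V | ∃ h : a ≠ u, (G.induce {x : V | x ≠ u}).Reachable ⟨a, h⟩ ⟨w, hwu⟩} →
      {col : Fin (G.maxDegree + 2) | ∃ a, a ∈ {a : V | ∃ h : a ≠ u, (G.induce {x : V | x ≠ u}).Reachable ⟨a, h⟩ ⟨w, hwu⟩} ∧ G.Adj a t ∧ (fun a b => if h : a ∈ {a : V | ∃ h : a ≠ u, (G.induce {x : V | x ≠ u}).Reachable ⟨a, h⟩ ⟨w, hwu⟩} ∧ b ∈ {a : V | ∃ h : a ≠ u, (G.induce {x : V | x ≠ u}).Reachable ⟨a, h⟩ ⟨w, hwu⟩} then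
      cw ⟨⟨a, Exists.choose h.1⟩, memCw a h.1⟩ ⟨⟨b, Exists.choose h.2⟩, memCw b h.2⟩ else 0) a t = col}.ncard ≤ 2 := by
    intro t ht
    have hsub : {col : Fin (G.maxDegree + 2) | ∃ a, a ∈ {a : V | ∃ h : a ≠ u, (G.induce {x : V | x ≠ u}).Reachable ⟨a, h⟩ ⟨w, hwu⟩} ∧ G.Adj a t ∧ (fun a b => if h : a ∈ {a : V | ∃ h : a ≠ u, (G.induce {x : V | x ≠ u}).Reachable ⟨a, h⟩ ⟨w, hwu⟩} ∧ b ∈ {a : V | ∃ h : a ≠ u, (G.induce {x : V | x ≠ u}).Reachable ⟨a, h⟩ ⟨w, hwu⟩} then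
      cw ⟨⟨a, Exists.choose h.1⟩, memCw a h.1⟩ ⟨⟨b, Exists.choose h.2⟩, memCw b h.2⟩ else 0) a t = col} ⊆
        {col : Fin (G.maxDegree + 2) | ∃ a2, ((G.induce {x : V | x ≠ u}).induce ((G.induce {x : V | x ≠ u}).connectedComponentMk ⟨w, hwu⟩).supp).Adj a2
          ⟨⟨t, Exists.choose ht⟩, memCw t ht⟩ ∧ cw a2 ⟨⟨t, Exists.choose ht⟩, memCw t ht⟩ = col} := by
      rintro col ⟨a, ha, hat, hcol⟩
      exact ⟨⟨⟨a, Exists.choose ha⟩, memCw a ha⟩, hat, by rw [← cWeq a t ha ht]; exact hcol⟩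
    exact le_trans (Set.ncard_le_ncard hsub (Set.toFinite _))
      (hcw2 ⟨⟨t, Exists.choose ht⟩, memCw t ht⟩)
  have hdegAv : ∀ (z : V), G.Adj u z → z ≠ u →
      (((G.neighborFinset z).erase u : Finset V) : Set V).ncard + 3 ≤ G.maxDegree + 2 := by
    intro z hz hzu
    have humem : u ∈ G.neighborFinset z := by simp [hz.symm]
    have h1 : ((G.neighborFinset z).erase u).card = G.degree z - 1 := by
      rw [Finset.card_erase_of_mem humem, G.card_neighborFinset_eq_degree]
    have h2 : 1 ≤ G.degree z := by
      have := Finset.card_pos.mpr ⟨u, humem⟩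
      rw [G.card_neighborFinset_eq_degree] at this
      omega
    have h3 : G.degree z ≤ G.maxDegree := G.degree_le_maxDegree z
    rw [Set.ncard_coe_finset, h1]
    omega
  have hAv : {col : Fin (G.maxDegree + 2) | ∃ b, b ∈ {a : V | ∃ h : a ≠ u, (G.induce {x : V | x ≠ u}).Reachable ⟨a, h⟩ ⟨v, hvu⟩} ∧ G.Adj v b ∧ (fun a b => if h : a ∈ {a : V | ∃ h : a ≠ u, (G.induce {x : V | x ≠ u}).Reachable ⟨a, h⟩ ⟨v, hvu⟩} ∧ b ∈ {a : V | ∃ h : a ≠ u, (G.induce {x : V | x ≠ u}).Reachable ⟨a, h⟩ ⟨v, hvu⟩} then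
      cv ⟨⟨a, Exists.choose h.1⟩, memCv a h.1⟩ ⟨⟨b, Exists.choose h.2⟩, memCv b h.2⟩ else 0) v b = col}.ncard
      + 3 ≤ G.maxDegree + 2 := by
    have hsub : {col : Fin (G.maxDegree + 2) | ∃ b, b ∈ {a : V | ∃ h : a ≠ u, (G.induce {x : V | x ≠ u}).Reachable ⟨a, h⟩ ⟨v, hvu⟩} ∧ G.Adj v b ∧ (fun a b => if h : a ∈ {a : V | ∃ h : a ≠ u, (G.induce {x : V | x ≠ u}).Reachable ⟨a, h⟩ ⟨v, hvu⟩} ∧ b ∈ {a : V | ∃ h : a ≠ u, (G.induce {x : V | x ≠ u}).Reachable ⟨a, h⟩ ⟨v, hvu⟩} then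
      cv ⟨⟨a, Exists.choose h.1⟩, memCv a h.1⟩ ⟨⟨b, Exists.choose h.2⟩, memCv b h.2⟩ else 0) v b = col} ⊆
        (fun b => (fun a b => if h : a ∈ {a : V | ∃ h : a ≠ u, (G.induce {x : V | x ≠ u}).Reachable ⟨a, h⟩ ⟨v, hvu⟩} ∧ b ∈ {a : V | ∃ h : a ≠ u, (G.induce {x : V | x ≠ u}).Reachable ⟨a, h⟩ ⟨v, hvu⟩} then
      cv ⟨⟨a, Exists.choose h.1⟩, memCv a h.1⟩ ⟨⟨b, Exists.choose h.2⟩, memCv b h.2⟩ else 0) v b) '' (((G.neighborFinset v).erase u : Finset V) : Set V) := by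
      rintro col ⟨b, hb, hvb, rfl⟩
      refine ⟨b, ?_, rfl⟩
      have hbu : b ≠ u := Exists.choose hb
      simp [Finset.mem_erase, hbu, hvb]
    have h1 := Set.ncard_le_ncard hsub (Set.toFinite _)
    have h2 := Set.ncard_image_le (s := (((G.neighborFinset v).erase u : Finset V) : Set V))
      (f := fun b => (fun a b => if h : a ∈ {a : V | ∃ h : a ≠ u, (G.induce {x : V | x ≠ u}).Reachable ⟨a, h⟩ ⟨v, hvu⟩} ∧ b ∈ {a : V | ∃ h : a ≠ u, (G.induce {x : V | x ≠ u}).Reachable ⟨a, h⟩ ⟨v, hvu⟩} then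
      cv ⟨⟨a, Exists.choose h.1⟩, memCv a h.1⟩ ⟨⟨b, Exists.choose h.2⟩, memCv b h.2⟩ else 0) v b) (Set.toFinite _)
    have h3 := hdegAv v huv hvu
    omega
  have hAw : {col : Fin (G.maxDegree + 2) | ∃ b, b ∈ {a : V | ∃ h : a ≠ u, (G.induce {x : V | x ≠ u}).Reachable ⟨a, h⟩ ⟨w, hwu⟩} ∧ G.Adj w b ∧ (fun a b => if h : a ∈ {a : V | ∃ h : a ≠ u, (G.induce {x : V | x ≠ u}).Reachable ⟨a, h⟩ ⟨w, hwu⟩} ∧ b ∈ {a : V | ∃ h : a ≠ u, (G.induce {x : V | x ≠ u}).Reachable ⟨a, h⟩ ⟨w, hwu⟩} then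
      cw ⟨⟨a, Exists.choose h.1⟩, memCw a h.1⟩ ⟨⟨b, Exists.choose h.2⟩, memCw b h.2⟩ else 0) w b = col}.ncard
      + 3 ≤ G.maxDegree + 2 := by
    have hsub : {col : Fin (G.maxDegree + 2) | ∃ b, b ∈ {a : V | ∃ h : a ≠ u, (G.induce {x : V | x ≠ u}).Reachable ⟨a, h⟩ ⟨w, hwu⟩} ∧ G.Adj w b ∧ (fun a b => if h : a ∈ {a : V | ∃ h : a ≠ u, (G.induce {x : V | x ≠ u}).Reachable ⟨a, h⟩ ⟨w, hwu⟩} ∧ b ∈ {a : V | ∃ h : a ≠ u, (G.induce {x : V | x ≠ u}).Reachable ⟨a, h⟩ ⟨w, hwu⟩} then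
      cw ⟨⟨a, Exists.choose h.1⟩, memCw a h.1⟩ ⟨⟨b, Exists.choose h.2⟩, memCw b h.2⟩ else 0) w b = col} ⊆
        (fun b => (fun a b => if h : a ∈ {a : V | ∃ h : a ≠ u, (G.induce {x : V | x ≠ u}).Reachable ⟨a, h⟩ ⟨w, hwu⟩} ∧ b ∈ {a : V | ∃ h : a ≠ u, (G.induce {x : V | x ≠ u}).Reachable ⟨a, h⟩ ⟨w, hwu⟩} then
      cw ⟨⟨a, Exists.choose h.1⟩, memCw a h.1⟩ ⟨⟨b, Exists.choose h.2⟩, memCw b h.2⟩ else 0) w b) '' (((G.neighborFinset w).erase u : Finset V) : Set V) := by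
      rintro col ⟨b, hb, hvb, rfl⟩
      refine ⟨b, ?_, rfl⟩
      have hbu : b ≠ u := Exists.choose hb
      simp [Finset.mem_erase, hbu, hvb]
    have h1 := Set.ncard_le_ncard hsub (Set.toFinite _)
    have h2 := Set.ncard_image_le (s := (((G.neighborFinset w).erase u : Finset V) : Set V))
      (f := fun b => (fun a b => if h : a ∈ {a : V | ∃ h : a ≠ u, (G.induce {x : V | x ≠ u}).Reachable ⟨a, h⟩ ⟨w, hwu⟩} ∧ b ∈ {a : V | ∃ h : a ≠ u, (G.induce {x : V | x ≠ u}).Reachable ⟨a, h⟩ ⟨w, hwu⟩} then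
      cw ⟨⟨a, Exists.choose h.1⟩, memCw a h.1⟩ ⟨⟨b, Exists.choose h.2⟩, memCw b h.2⟩ else 0) w b) (Set.toFinite _)
    have h3 := hdegAv w huw hwu
    omega
  exact combine G u v w (G.maxDegree + 2) (by omega) hvw {a : V | ∃ h : a ≠ u, (G.induce {x : V | x ≠ u}).Reachable ⟨a, h⟩ ⟨v, hvu⟩} {a : V | ∃ h : a ≠ u, (G.induce {x : V | x ≠ u}).Reachable ⟨a, h⟩ ⟨w, hwu⟩} hSvu hSwu hdisj hv hw
    hcover hedgev hedgew hnbr (fun a b => if h : a ∈ {a : V | ∃ h : a ≠ u, (G.induce {x : V | x ≠ u}).Reachable ⟨a, h⟩ ⟨v, hvu⟩} ∧ b ∈ {a : V | ∃ h : a ≠ u, (G.induce {x : V | x ≠ u}).Reachable ⟨a, h⟩ ⟨v, hvu⟩} then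
      cv ⟨⟨a, Exists.choose h.1⟩, memCv a h.1⟩ ⟨⟨b, Exists.choose h.2⟩, memCv b h.2⟩ else 0) (fun a b => if h : a ∈ {a : V | ∃ h : a ≠ u, (G.induce {x : V | x ≠ u}).Reachable ⟨a, h⟩ ⟨w, hwu⟩} ∧ b ∈ {a : V | ∃ h : a ≠ u, (G.induce {x : V | x ≠ u}).Reachable ⟨a, h⟩ ⟨w, hwu⟩} then
      cw ⟨⟨a, Exists.choose h.1⟩, memCw a h.1⟩ ⟨⟨b, Exists.choose h.2⟩, memCw b h.2⟩ else 0) hVp hVi hWp hWi hAv hAw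
end

section
/- Every connected simple outerplanar graph with minimum degree at least 2 is a spanning subgraph of a 2-connected outerplanar graph on the same vertex set (i.e., one whose outer face boundary is a cycle). -/
/-!
Order the vertices along the spine of a one-page book embedding and add the edges between
consecutive vertices together with the edge from the last vertex to the first. None of these
edges can be crossed (a consecutive pair spans no vertex, the closing edge spans all of them), so
the graph stays outerplanar, and it now contains a Hamiltonian cycle, which stays connected
after deleting any one vertex.
-/

namespace SimpleGraph

section PartialOrder

variable {α : Type*} [PartialOrder α] [LocallyFiniteOrder α]

theorem reachable_induce_of_le_of_Icc_subset {G : SimpleGraph α} (hG : hasse α ≤ G)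
    {s : Set α} {a b : α} (ha : a ∈ s) (hb : b ∈ s) (hab : a ≤ b) (hs : Set.Icc a b ⊆ s) :
    (G.induce s).Reachable ⟨a, ha⟩ ⟨b, hb⟩ := by
  induction le_iff_reflTransGen_covBy.1 hab with
  | refl => rfl
  | @tail z b haz hzb ih =>
    have haz : a ≤ z := le_iff_reflTransGen_covBy.2 haz
    have hz : z ∈ s := hs ⟨haz, hzb.le⟩
    have hadj : (G.induce s).Adj ⟨z, hz⟩ ⟨b, hb⟩ := hG (Or.inl hzb)
    exact (ih hz haz ((Set.Icc_subset_Icc_right hzb.le).trans hs)).trans hadj.reachable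

end PartialOrder

variable {α : Type*} [LinearOrder α]

theorem reachable_induce_of_uIcc_subset [LocallyFiniteOrder α] {G : SimpleGraph α}
    (hG : hasse α ≤ G) {s : Set α} {a b : α} (ha : a ∈ s) (hb : b ∈ s)
    (hs : Set.uIcc a b ⊆ s) : (G.induce s).Reachable ⟨a, ha⟩ ⟨b, hb⟩ := by
  rcases le_total a b with hab | hba
  · exact reachable_induce_of_le_of_Icc_subset hG ha hb hab (Set.Icc_subset_uIcc.trans hs)
  · exact (reachable_induce_of_le_of_Icc_subset hG hb ha hba
      (Set.Icc_subset_uIcc'.trans hs)).symm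

variable (α) in
def orderCycle : SimpleGraph α :=
  hasse α ⊔ fromRel fun u v => IsBot u ∧ IsTop v

theorem orderCycle_adj_of_lt {a b : α} (h : (orderCycle α).Adj a b) (hab : a < b) :
    a ⋖ b ∨ (IsBot a ∧ IsTop b) := by
  rcases h with (h | h) | ⟨-, h | h⟩
  · exact .inl h
  · exact absurd h.lt hab.not_gt
  · exact .inr h
  · exact absurd (h.1 a) hab.not_ge

def NonCrossing (G : SimpleGraph α) : Prop :=
  ∀ a b c d, G.Adj a b → G.Adj c d → ¬(a < c ∧ c < b ∧ b < d)

theorem NonCrossing.sup_orderCycle {G : SimpleGraph α} (hG : G.NonCrossing) :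
    (G ⊔ orderCycle α).NonCrossing := by
  rintro a b c d (hab | hab) hcd ⟨hac, hcb, hbd⟩
  · rcases hcd with hcd | hcd
    · exact hG a b c d hab hcd ⟨hac, hcb, hbd⟩
    · rcases orderCycle_adj_of_lt hcd (hcb.trans hbd) with h | h
      · exact h.2 hcb hbd
      · exact (h.1 a).not_gt hac
  · rcases orderCycle_adj_of_lt hab (hac.trans hcb) with h | h
    · exact h.2 hac hcb
    · exact (h.2 d).not_gt hbd

theorem connected_induce_ne_of_orderCycle_le [Finite α] [Nontrivial α] {G : SimpleGraph α}
    (hG : orderCycle α ≤ G) (u : α) : (G.induce {x | x ≠ u}).Connected := by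
  have := Fintype.ofFinite α
  let := Fintype.toLocallyFiniteOrder (α := α)
  have hasse_le : hasse α ≤ G := le_sup_left.trans hG
  obtain ⟨bot, hbot⟩ : ∃ x : α, IsBot x := Finite.exists_min id
  obtain ⟨top, htop⟩ : ∃ x : α, IsTop x := Finite.exists_max id
  -- the two arcs of the cycle around `u` are joined by the edge from `top` to `bot`
  have across {a b : α} (ha : a ≠ u) (hb : b ≠ u) (hau : a < u) (hub : u < b) :
      (G.induce {x | x ≠ u}).Reachable ⟨a, ha⟩ ⟨b, hb⟩ := by
    have hbot_ne : bot ≠ u := ((hbot a).trans_lt hau).ne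
    have htop_ne : top ≠ u := (hub.trans_le (htop b)).ne'
    have hbot_lt_top : bot < top := ((hbot a).trans_lt (hau.trans hub)).trans_le (htop b)
    have hadj : (G.induce {x | x ≠ u}).Adj ⟨bot, hbot_ne⟩ ⟨top, htop_ne⟩ :=
      hG (Or.inr ⟨hbot_lt_top.ne, .inl ⟨hbot, htop⟩⟩)
    refine (reachable_induce_of_uIcc_subset hasse_le ha hbot_ne ?_).trans
      (hadj.reachable.trans (reachable_induce_of_uIcc_subset hasse_le htop_ne hb ?_))
    · rw [Set.uIcc_of_ge (hbot a)]
      exact fun x hx => (hx.2.trans_lt hau).ne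
    · rw [Set.uIcc_of_ge (htop b)]
      exact fun x hx => (hub.trans_le hx.1).ne'
  obtain ⟨v, hv⟩ := exists_ne u
  refine (connected_iff _).2 ⟨fun ⟨a, ha⟩ ⟨b, hb⟩ => ?_, ⟨⟨v, hv⟩⟩⟩
  by_cases hu : u ∈ Set.uIcc a b
  · rcases Set.mem_uIcc.1 hu with ⟨hau, hub⟩ | ⟨hbu, hua⟩
    · exact across ha hb (hau.lt_of_ne ha) (hub.lt_of_ne' hb)
    · exact (across hb ha (hbu.lt_of_ne hb) (hua.lt_of_ne' ha)).symm
  · exact reachable_induce_of_uIcc_subset hasse_le ha hb fun x hx hxu => hu (hxu ▸ hx)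

end SimpleGraph

theorem stmt_11_general {V : Type*} [Fintype V] (G : SimpleGraph V)
    [DecidableRel G.Adj] (hconn : G.Connected) (hmin : ∀ v, 2 ≤ G.degree v)
    (hout : Outerplanar G) :
    ∃ H : SimpleGraph V, G ≤ H ∧ Outerplanar H ∧
      3 ≤ Fintype.card V ∧ ∀ u : V, (H.induce {x | x ≠ u}).Connected := by
  obtain ⟨f, hf, hG⟩ := hout
  let : LinearOrder V := LinearOrder.lift' f hf
  obtain ⟨v⟩ := hconn.nonempty
  have hcard : 3 ≤ Fintype.card V := (hmin v).trans_lt (G.degree_lt_card_verts v)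
  have : Nontrivial V := Fintype.one_lt_card_iff_nontrivial.1 (by omega)
  exact ⟨G ⊔ SimpleGraph.orderCycle V, le_sup_left,
    ⟨f, hf, SimpleGraph.NonCrossing.sup_orderCycle hG⟩, hcard,
    SimpleGraph.connected_induce_ne_of_orderCycle_le le_sup_right⟩

/-- Every connected outerplanar graph with minimum degree at least 2 is a spanning
subgraph of a 2-connected outerplanar graph on the same vertex set. -/
theorem stmt_11 {V : Type*} [Fintype V] [DecidableEq V] (G : SimpleGraph V)
    [DecidableRel G.Adj] (hconn : G.Connected) (hmin : ∀ v, 2 ≤ G.degree v)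
    (hout : Outerplanar G) :
    ∃ H : SimpleGraph V, G ≤ H ∧ Outerplanar H ∧
      3 ≤ Fintype.card V ∧ ∀ u : V, (H.induce {x | x ≠ u}).Connected :=
  stmt_11_general G hconn hmin hout
end
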